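/- arXiv:2402.10648 — 3 statements merged into one kernel-verified Lean document; each statement's English description precedes it below -/
import Mathlib

section
/- The category Mod_𝒰 of 𝒰-modules is equivalent to its opposite category (Mod_𝒰)^op; that is, Mod_𝒰 is self-dual. -/
set_option linter.unusedVariables false

open CategoryTheory

/-- An `[n]`-weighted finite set. -/
structure WSet (n : ℕ) where
  carrier : Type
  [fin : Finite carrier]
  wt : carrier → Fin n

attribute [instance] WSet.fin

/-- The category `𝒰` of `[n]`-weighted finite sets and weight-nondecreasing bijections. -/
instance WSet.category (n : ℕ) : Category (WSet n) where
  Hom S T := {φ : S.carrier ≃ T.carrier // ∀ x, S.wt x ≤ T.wt (φ x)}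
  id S := ⟨Equiv.refl _, fun _ => le_refl _⟩
  comp f g := ⟨f.1.trans g.1, fun x => le_trans (f.2 x) (g.2 (f.1 x))⟩
  id_comp f := Subtype.ext (Equiv.ext fun _ => rfl)
  comp_id f := Subtype.ext (Equiv.ext fun _ => rfl)
  assoc f g h := Subtype.ext (Equiv.ext fun _ => rfl)

/-- The standard weighted set attached to a tuple `a : Fin n → ℕ`; every object of `𝒰` is
isomorphic to a unique such object. -/
def stdW (n : ℕ) (a : Fin n → ℕ) : WSet n := ⟨(i : Fin n) × Fin (a i), Sigma.fst⟩

/-- A functor `𝒰 ⥤ Vec_ℂ` has finite support if it is nonzero on only finitely many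
isomorphism classes of objects. -/
def FinSupp (n : ℕ) (M : WSet n ⥤ FGModuleCat ℂ) : Prop :=
  {a : Fin n → ℕ | ¬ Subsingleton (M.obj (stdW n a))}.Finite

/-- The category `Mod_𝒰` of `𝒰`-modules. -/
abbrev ModU (n : ℕ) := ObjectProperty.FullSubcategory (fun M : WSet n ⥤ FGModuleCat ℂ => FinSupp n M)

/-! ### Auxiliary material -/

/-- Weight reversal on `Fin n`. -/
def wrevFin {n : ℕ} (i : Fin n) : Fin n := ⟨n - 1 - i.1, by omega⟩

lemma wrevFin_wrevFin {n : ℕ} (i : Fin n) : wrevFin (wrevFin i) = i := by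
  have := i.isLt; exact Fin.ext (by simp [wrevFin]; omega)

lemma wrevFin_le {n : ℕ} {i j : Fin n} (h : i ≤ j) : wrevFin j ≤ wrevFin i := by
  have := i.isLt; have := j.isLt
  simp only [wrevFin, Fin.le_def] at h ⊢; omega

/-- Reverse all the weights of a weighted set. -/
def revW {n : ℕ} (S : WSet n) : WSet n := ⟨S.carrier, fun x => wrevFin (S.wt x)⟩

/-- Weight reversal as a self-duality of the category `𝒰`. -/
def wrevEquiv (n : ℕ) : WSet n ≌ (WSet n)ᵒᵖ :=
  CategoryTheory.Equivalence.mk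
    { obj := fun S => Opposite.op (revW S)
      map := fun {S T} f => Quiver.Hom.op
        (⟨f.1.symm, fun y => by
          have h := f.2 (f.1.symm y)
          erw [Equiv.apply_symm_apply] at h
          exact wrevFin_le h⟩ : revW T ⟶ revW S)
      map_id := fun S => rfl
      map_comp := fun f g => rfl }
    { obj := fun X => revW X.unop
      map := fun {X Y} f =>
        ⟨f.unop.1.symm, fun x => by
          have h := f.unop.2 (f.unop.1.symm x)
          erw [Equiv.apply_symm_apply] at h
          exact wrevFin_le h⟩
      map_id := fun X => rfl
      map_comp := fun f g => rfl }
    (NatIso.ofComponents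
      (fun S => ⟨⟨Equiv.refl _, fun x => le_of_eq (wrevFin_wrevFin (S.wt x)).symm⟩,
                 ⟨Equiv.refl _, fun x => le_of_eq (wrevFin_wrevFin (S.wt x))⟩,
                 rfl, rfl⟩)
      (fun f => rfl))
    (NatIso.ofComponents
      (fun X => Iso.op
        ⟨⟨Equiv.refl _, fun x => le_of_eq (wrevFin_wrevFin (X.unop.wt x)).symm⟩,
         ⟨Equiv.refl _, fun x => le_of_eq (wrevFin_wrevFin (X.unop.wt x))⟩,
         rfl, rfl⟩)
      (fun f => rfl))

/-- An iso in `FGModuleCat` from a linear equivalence of the carriers. -/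
def fgIso {V W : FGModuleCat ℂ} (e : V ≃ₗ[ℂ] W) : V ≅ W :=
  ⟨⟨ModuleCat.ofHom e.toLinearMap⟩, ⟨ModuleCat.ofHom e.symm.toLinearMap⟩,
   FGModuleCat.hom_ext (LinearMap.ext fun x => e.symm_apply_apply x),
   FGModuleCat.hom_ext (LinearMap.ext fun x => e.apply_symm_apply x)⟩

/-- Linear duality as an equivalence `FGModuleCat ℂ ≌ (FGModuleCat ℂ)ᵒᵖ`. -/
noncomputable def dualEquiv : FGModuleCat ℂ ≌ (FGModuleCat ℂ)ᵒᵖ :=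
  CategoryTheory.Equivalence.mk
    { obj := fun V => Opposite.op (FGModuleCat.of ℂ (Module.Dual ℂ V))
      map := fun {V W} f => Quiver.Hom.op
        (FGModuleCat.ofHom (LinearMap.dualMap f.hom.hom) :
          FGModuleCat.of ℂ (Module.Dual ℂ W) ⟶ FGModuleCat.of ℂ (Module.Dual ℂ V))
      map_id := fun V => rfl
      map_comp := fun f g => rfl }
    { obj := fun X => FGModuleCat.of ℂ (Module.Dual ℂ X.unop)
      map := fun {X Y} f =>
        (FGModuleCat.ofHom (LinearMap.dualMap f.unop.hom.hom) :
          FGModuleCat.of ℂ (Module.Dual ℂ X.unop) ⟶ FGModuleCat.of ℂ (Module.Dual ℂ Y.unop))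
      map_id := fun X => rfl
      map_comp := fun f g => rfl }
    (NatIso.ofComponents
      (fun V => fgIso (Module.evalEquiv ℂ V))
      (fun {V W} f => FGModuleCat.hom_ext (LinearMap.ext fun x => LinearMap.ext fun φ => rfl)))
    (NatIso.ofComponents
      (fun X => Iso.op (fgIso (Module.evalEquiv ℂ X.unop)))
      (fun {X Y} f => Quiver.Hom.unop_inj (FGModuleCat.hom_ext (LinearMap.ext fun x => LinearMap.ext fun φ => rfl))))

/-- The self-duality of the category of all functors `𝒰 ⥤ Vec_ℂ`. -/
noncomputable def bigE (n : ℕ) :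
    (WSet n ⥤ FGModuleCat ℂ) ≌ (WSet n ⥤ FGModuleCat ℂ)ᵒᵖ :=
  (dualEquiv.congrRight.trans (wrevEquiv n).congrLeft).trans
    (Functor.opUnopEquiv (WSet n) (FGModuleCat ℂ)).symm

lemma bigE_functor_obj (n : ℕ) (M : WSet n ⥤ FGModuleCat ℂ) (S : WSet n) :
    ((bigE n).functor.obj M).unop.obj S
      = FGModuleCat.of ℂ (Module.Dual ℂ (M.obj (revW S))) := rfl

lemma bigE_inverse_obj (n : ℕ) (X : (WSet n ⥤ FGModuleCat ℂ)ᵒᵖ) (S : WSet n) :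
    ((bigE n).inverse.obj X).obj S
      = FGModuleCat.of ℂ (Module.Dual ℂ (X.unop.obj (revW S))) := rfl

/-- The carrier equivalence between `stdW n (a ∘ wrevFin)` and `revW (stdW n a)`. -/
noncomputable def stdEquiv {n : ℕ} (a : Fin n → ℕ) :
    ((j : Fin n) × Fin (a (wrevFin j))) ≃ ((i : Fin n) × Fin (a i)) :=
  Equiv.ofBijective (fun p => ⟨wrevFin p.1, p.2⟩) (by
    constructor
    · rintro ⟨j, y⟩ ⟨j', y'⟩ h
      obtain ⟨h1, h2⟩ := Sigma.mk.inj_iff.mp h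
      have hj : j = j' := by
        have := congrArg wrevFin h1
        rwa [wrevFin_wrevFin, wrevFin_wrevFin] at this
      subst hj
      exact Sigma.ext rfl (by simpa using h2)
    · rintro ⟨i, x⟩
      have h : wrevFin (wrevFin i) = i := wrevFin_wrevFin i
      exact ⟨⟨wrevFin i, Fin.cast (congrArg a h.symm) x⟩,
        Sigma.ext h ((Fin.heq_ext_iff (congrArg a h)).mpr rfl)⟩)

lemma stdEquiv_wt {n : ℕ} (a : Fin n → ℕ) (p : (j : Fin n) × Fin (a (wrevFin j))) :
    (revW (stdW n a)).wt (stdEquiv a p) = p.1 := by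
  obtain ⟨j, y⟩ := p
  show wrevFin (wrevFin j) = j
  exact wrevFin_wrevFin j

/-- `revW (stdW n a)` is isomorphic to the standard object on the reversed tuple. -/
noncomputable def revStdIso {n : ℕ} (a : Fin n → ℕ) :
    revW (stdW n a) ≅ stdW n (fun j => a (wrevFin j)) where
  hom := ⟨(stdEquiv a).symm, fun x => le_of_eq (by
    have h := stdEquiv_wt a ((stdEquiv a).symm x)
    erw [(stdEquiv a).apply_symm_apply] at h
    exact h)⟩
  inv := ⟨stdEquiv a, fun p => le_of_eq (stdEquiv_wt a p).symm⟩
  hom_inv_id := Subtype.ext (Equiv.ext fun x => (stdEquiv a).apply_symm_apply x)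
  inv_hom_id := Subtype.ext (Equiv.ext fun p => (stdEquiv a).symm_apply_apply p)

lemma ss_iff_of_iso {V W : FGModuleCat ℂ} (e : V ≅ W) :
    Subsingleton V ↔ Subsingleton W :=
  (FGModuleCat.isoToLinearEquiv e).toEquiv.subsingleton_congr

lemma dual_ss (V : FGModuleCat ℂ) :
    Subsingleton (Module.Dual ℂ V) ↔ Subsingleton (V : Type _) := by
  rw [← Module.finrank_zero_iff (R := ℂ), ← Module.finrank_zero_iff (R := ℂ),
    Subspace.dual_finrank_eq]

/-- Transfer of the finite-support condition along the duality. -/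
lemma finSupp_aux (n : ℕ) (M N : WSet n ⥤ FGModuleCat ℂ)
    (h : ∀ S, N.obj S = FGModuleCat.of ℂ (Module.Dual ℂ (M.obj (revW S))))
    (hM : FinSupp n M) : FinSupp n N := by
  set g : (Fin n → ℕ) → (Fin n → ℕ) := fun a j => a (wrevFin j) with hg
  have hginj : Function.Injective g := by
    intro a b hab
    funext i
    have := congrFun hab (wrevFin i)
    simpa [hg, wrevFin_wrevFin] using this
  have key : ∀ a : Fin n → ℕ,
      Subsingleton (N.obj (stdW n a)) ↔ Subsingleton (M.obj (stdW n (g a))) := by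
    intro a
    rw [h (stdW n a)]
    calc Subsingleton (FGModuleCat.of ℂ (Module.Dual ℂ (M.obj (revW (stdW n a)))) : Type _)
        ↔ Subsingleton (M.obj (revW (stdW n a)) : Type _) := dual_ss _
      _ ↔ Subsingleton (M.obj (stdW n (g a)) : Type _) := ss_iff_of_iso (M.mapIso (revStdIso a))
  have hset : {a : Fin n → ℕ | ¬ Subsingleton (N.obj (stdW n a))}
      = g ⁻¹' {a : Fin n → ℕ | ¬ Subsingleton (M.obj (stdW n a))} := by
    ext a
    simp only [Set.mem_setOf_eq, Set.mem_preimage, key a]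
  rw [FinSupp, hset]
  exact hM.preimage hginj.injOn

/-- An iso in a full subcategory from an iso of underlying objects. -/
def fsIso {C : Type*} [Category C] {P : C → Prop} {X Y : ObjectProperty.FullSubcategory P}
    (e : X.obj ≅ Y.obj) : X ≅ Y :=
  ⟨⟨e.hom⟩, ⟨e.inv⟩, InducedCategory.hom_ext e.hom_inv_id, InducedCategory.hom_ext e.inv_hom_id⟩

/-- An equivalence restricts to full subcategories compatible with it. -/
def equivFullSub {C D : Type*} [Category C] [Category D] (E : C ≌ D)
    (P : C → Prop) (Q : D → Prop)
    (h : ∀ X, P X → Q (E.functor.obj X)) (h' : ∀ Y, Q Y → P (E.inverse.obj Y)) :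
    ObjectProperty.FullSubcategory P ≌ ObjectProperty.FullSubcategory Q :=
  CategoryTheory.Equivalence.mk
    (ObjectProperty.lift Q (ObjectProperty.ι P ⋙ E.functor) fun X => h _ X.2)
    (ObjectProperty.lift P (ObjectProperty.ι Q ⋙ E.inverse) fun Y => h' _ Y.2)
    (NatIso.ofComponents (fun X => fsIso (E.unitIso.app X.obj))
      (fun {X Y} f => InducedCategory.hom_ext (E.unitIso.hom.naturality f.hom)))
    (NatIso.ofComponents (fun Y => fsIso (E.counitIso.app Y.obj))
      (fun {X Y} f => InducedCategory.hom_ext (E.counitIso.hom.naturality f.hom)))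

/-- The opposite of a full subcategory is the full subcategory of the opposite. -/
def fullSubOp {C : Type*} [Category C] (P : C → Prop) :
    ObjectProperty.FullSubcategory (fun X : Cᵒᵖ => P X.unop) ≌ (ObjectProperty.FullSubcategory P)ᵒᵖ :=
  CategoryTheory.Equivalence.mk
    { obj := fun X => Opposite.op ⟨X.obj.unop, X.2⟩
      map := fun {X Y} f => Quiver.Hom.op (⟨f.hom.unop⟩ :
        (⟨Y.obj.unop, Y.2⟩ : ObjectProperty.FullSubcategory P) ⟶ ⟨X.obj.unop, X.2⟩)
      map_id := fun X => rfl
      map_comp := fun f g => rfl }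
    { obj := fun Y => ⟨Opposite.op Y.unop.obj, Y.unop.2⟩
      map := fun {X Y} f => ⟨Quiver.Hom.op (f.unop.hom :
        (Y.unop : ObjectProperty.FullSubcategory P).obj ⟶ X.unop.obj)⟩
      map_id := fun X => rfl
      map_comp := fun f g => rfl }
    (NatIso.ofComponents (fun X => Iso.refl _) (fun f => by simp; rfl))
    (NatIso.ofComponents (fun X => Iso.refl _) (fun f => by simp; rfl))

universe u v

instance fgUlift_essSurj : (FGModuleCat.ulift.{u, v} ℂ).EssSurj where
  mem_essImage W := ⟨FGModuleCat.of ℂ (ULift.{u} (Fin (Module.finrank ℂ W) → ℂ)),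
    ⟨fgIso (ULift.moduleEquiv.trans (ULift.moduleEquiv.trans
      (LinearEquiv.ofFinrankEq (Fin (Module.finrank ℂ W) → ℂ) W (by simp))))⟩⟩

noncomputable def fgUlift : FGModuleCat.{u} ℂ ≌ FGModuleCat.{max u v} ℂ :=
  (FGModuleCat.ulift.{u, v} ℂ).asEquivalence

lemma ss_fgUlift (V : FGModuleCat.{u} ℂ) :
    Subsingleton ((fgUlift.{u, v}).functor.obj V) ↔ Subsingleton V :=
  Equiv.ulift.subsingleton_congr

lemma ss_fgUlift_inv (W : FGModuleCat.{max u v} ℂ) :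
    Subsingleton ((fgUlift.{u, v}).inverse.obj W) ↔ Subsingleton W := by
  rw [← ss_fgUlift.{u, v}]
  exact ss_iff_of_iso ((fgUlift.{u, v}).counitIso.app W)

lemma finSupp_transfer (n : ℕ) (M : WSet n ⥤ FGModuleCat.{u} ℂ) (N : WSet n ⥤ FGModuleCat.{v} ℂ)
    (h : ∀ S, Subsingleton (N.obj S) ↔ Subsingleton (M.obj S)) (hM : FinSupp n M) :
    FinSupp n N := by
  have hset : {a : Fin n → ℕ | ¬ Subsingleton (N.obj (stdW n a))}
      = {a : Fin n → ℕ | ¬ Subsingleton (M.obj (stdW n a))} := by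
    ext a
    simp only [Set.mem_setOf_eq, h]
  rw [FinSupp, hset]
  exact hM

noncomputable def modUniv (n : ℕ) : ModU.{u} n ≌ ModU.{max u v} n :=
  equivFullSub (fgUlift.{u, v}).congrRight (fun M => FinSupp n M) (fun M => FinSupp n M)
    (fun M hM => finSupp_transfer n M _ (fun S => ss_fgUlift (M.obj S)) hM)
    (fun M hM => finSupp_transfer n M _ (fun S => ss_fgUlift_inv (M.obj S)) hM)

theorem selfDual (n : ℕ) : Nonempty (ModU.{0} n ≌ (ModU.{0} n)ᵒᵖ) := by
  exact ⟨(equivFullSub (bigE n)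
    (fun M => FinSupp n M) (fun X => FinSupp n X.unop)
    (fun M hM => finSupp_aux n M ((bigE n).functor.obj M).unop (fun S => rfl) hM)
    (fun X hX => finSupp_aux n X.unop ((bigE n).inverse.obj X) (fun S => rfl) hX)).trans
    (fullSubOp (fun M : WSet n ⥤ FGModuleCat ℂ => FinSupp n M))⟩


theorem stmt5_aux (n : ℕ) : Nonempty (ModU.{u} n ≌ (ModU.{v} n)ᵒᵖ) := by
  obtain ⟨e⟩ := selfDual n
  exact ⟨(modUniv.{0, u} n).symm.trans (e.trans (modUniv.{0, v} n).op)⟩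

/-- The category of `𝒰`-modules is self-dual. -/
theorem stmt5 (n : ℕ) (hn : 1 ≤ n) : Nonempty (ModU n ≌ (ModU n)ᵒᵖ) := by
  exact stmt5_aux n
end

section
/- Every 𝒰-module has finite injective dimension and finite projective dimension: for every 𝒰-module M there exist k ≥ 0 and an exact sequence 0 → M → I^0 → I^1 → ⋯ → I^k → 0 in Mod_𝒰 with each I^j an injective object of Mod_𝒰, and there exist l ≥ 0 and an exact sequence 0 → P^l → ⋯ → P^1 → P^0 → M → 0 in Mod_𝒰 with each P^j a projective object of Mod_𝒰. -/
set_option linter.unusedVariables false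

open CategoryTheory

@[reducible] def CategoryTheory.InducedCategory.Hom.app {J : Type*} [Category J] {V : Type*} [Category V]
    {C : Type*} {F : C → (J ⥤ V)} {X Y : InducedCategory (J ⥤ V) F}
    (f : InducedCategory.Hom X Y) (j : J) : (F X).obj j ⟶ (F Y).obj j := f.hom.app j

theorem CategoryTheory.InducedCategory.Hom.naturality {J : Type*} [Category J] {V : Type*}
    [Category V] {C : Type*} {F : C → (J ⥤ V)} {X Y : InducedCategory (J ⥤ V) F}
    (f : InducedCategory.Hom X Y) {i j : J} (φ : i ⟶ j) :
    (F X).map φ ≫ f.app j = f.app i ≫ (F Y).map φ := f.hom.naturality φ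

namespace Stmt6Aux

variable {n : ℕ}

instance homFinite (S T : WSet n) : Finite (S ⟶ T) := by
  show Finite {φ : S.carrier ≃ T.carrier // ∀ x, S.wt x ≤ T.wt (φ x)}
  infer_instance

@[simp] lemma comp_coe {S T U : WSet n} (f : S ⟶ T) (g : T ⟶ U) (z : S.carrier) :
    (f ≫ g).1 z = g.1 (f.1 z) := rfl

@[simp] lemma id_coe {S : WSet n} (z : S.carrier) : (𝟙 S : S ⟶ S).1 z = z := rfl

lemma comp_right_inj {S T U : WSet n} (φ : T ⟶ U) :
    Function.Injective (fun g : S ⟶ T => g ≫ φ) := by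
  intro g g' h
  apply Subtype.ext; apply Equiv.ext; intro z
  have := congrArg (fun ψ : S ⟶ U => ψ.1 z) h
  simpa using φ.1.injective (by simpa using this)

lemma comp_left_inj {S T U : WSet n} (φ : S ⟶ T) :
    Function.Injective (fun g : T ⟶ U => φ ≫ g) := by
  intro g g' h
  apply Subtype.ext; apply Equiv.ext; intro z
  have := congrArg (fun ψ : S ⟶ U => ψ.1 (φ.1.symm z)) h
  simpa using this

/-- Total weight of a weighted set. -/
noncomputable def TW (S : WSet n) : ℕ :=
  letI := Fintype.ofFinite S.carrier
  ∑ z, ((S.wt z : ℕ) + 1)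

lemma tw_le {S T : WSet n} (φ : S ⟶ T) : TW S ≤ TW T := by
  letI := Fintype.ofFinite S.carrier
  letI := Fintype.ofFinite T.carrier
  show ∑ z, ((S.wt z : ℕ) + 1) ≤ ∑ z, ((T.wt z : ℕ) + 1)
  calc ∑ z, ((S.wt z : ℕ) + 1) ≤ ∑ z, ((T.wt (φ.1 z) : ℕ) + 1) := by
        apply Finset.sum_le_sum; intro z _; have := φ.2 z; omega
    _ = ∑ z, ((T.wt z : ℕ) + 1) := Equiv.sum_comp φ.1 (fun y => (T.wt y : ℕ) + 1)

lemma wt_eq_of_tw {S T : WSet n} (φ : S ⟶ T) (h : TW T ≤ TW S) (z : S.carrier) :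
    T.wt (φ.1 z) = S.wt z := by
  letI := Fintype.ofFinite S.carrier
  letI := Fintype.ofFinite T.carrier
  by_contra hne
  have hlt : (S.wt z : ℕ) + 1 < (T.wt (φ.1 z) : ℕ) + 1 := by
    have h1 := φ.2 z
    have : S.wt z < T.wt (φ.1 z) := lt_of_le_of_ne h1 (fun e => hne (e.symm))
    omega
  have hstrict : (TW S : ℕ) < TW T := by
    show (∑ w, ((S.wt w : ℕ) + 1)) < ∑ w, ((T.wt w : ℕ) + 1)
    calc ∑ w, ((S.wt w : ℕ) + 1) < ∑ w, ((T.wt (φ.1 w) : ℕ) + 1) := by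
          apply Finset.sum_lt_sum
          · intro w _; have := φ.2 w; omega
          · exact ⟨z, Finset.mem_univ z, hlt⟩
      _ = ∑ w, ((T.wt w : ℕ) + 1) := Equiv.sum_comp φ.1 (fun y => (T.wt y : ℕ) + 1)
  omega

/-- Explicit inverse of a total-weight-preserving morphism. -/
def minv {S T : WSet n} (φ : S ⟶ T) (h : TW T ≤ TW S) : T ⟶ S :=
  ⟨φ.1.symm, fun y => by
    have := wt_eq_of_tw φ h (φ.1.symm y)
    rw [Equiv.apply_symm_apply] at this
    exact le_of_eq this⟩

@[simp] lemma comp_minv {S T : WSet n} (φ : S ⟶ T) (h : TW T ≤ TW S) :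
    φ ≫ minv φ h = 𝟙 S := Subtype.ext (Equiv.ext fun z => φ.1.symm_apply_apply z)

@[simp] lemma minv_comp {S T : WSet n} (φ : S ⟶ T) (h : TW T ≤ TW S) :
    minv φ h ≫ φ = 𝟙 T := Subtype.ext (Equiv.ext fun z => φ.1.apply_symm_apply z)

/-- Every endomorphism in `WSet n` has an explicit inverse. -/
def einv {x : WSet n} (b : x ⟶ x) : x ⟶ x := minv b le_rfl

@[simp] lemma comp_einv {x : WSet n} (b : x ⟶ x) : b ≫ einv b = 𝟙 x := comp_minv b le_rfl
@[simp] lemma einv_comp {x : WSet n} (b : x ⟶ x) : einv b ≫ b = 𝟙 x := minv_comp b le_rfl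

lemma einv_comp_eq {x : WSet n} (b c : x ⟶ x) : einv (b ≫ c) = einv c ≫ einv b := by
  apply comp_right_inj (b ≫ c)
  show einv (b ≫ c) ≫ (b ≫ c) = (einv c ≫ einv b) ≫ (b ≫ c)
  rw [einv_comp]
  rw [Category.assoc]
  rw [show einv b ≫ b ≫ c = (einv b ≫ b) ≫ c from (Category.assoc _ _ _).symm, einv_comp,
    Category.id_comp, einv_comp]

@[simp] lemma einv_einv {x : WSet n} (b : x ⟶ x) : einv (einv b) = b := by
  apply comp_right_inj (einv b)
  show einv (einv b) ≫ einv b = b ≫ einv b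
  rw [einv_comp, comp_einv]

@[simp] lemma einv_id {x : WSet n} : einv (𝟙 x) = 𝟙 x := by
  apply comp_right_inj (𝟙 x)
  show einv (𝟙 x) ≫ 𝟙 x = 𝟙 x ≫ 𝟙 x
  rw [einv_comp, Category.id_comp]

/-- Right-composition by a fixed endomorphism is a bijection on endomorphisms. -/
def compEquiv {x : WSet n} (b : x ⟶ x) : (x ⟶ x) ≃ (x ⟶ x) where
  toFun c := c ≫ b
  invFun c := c ≫ einv b
  left_inv c := by show (c ≫ b) ≫ einv b = c; rw [Category.assoc, comp_einv, Category.comp_id]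
  right_inv c := by show (c ≫ einv b) ≫ b = c; rw [Category.assoc, einv_comp, Category.comp_id]

/-- The multiplicity of weight `i` in `S`. -/
noncomputable def cnt (S : WSet n) : Fin n → ℕ := fun i => Nat.card {z : S.carrier // S.wt z = i}

lemma cnt_stdW (a : Fin n → ℕ) : cnt (stdW n a) = a := by
  funext i
  show Nat.card {z : (j : Fin n) × Fin (a j) // z.1 = i} = a i
  have e : {z : (j : Fin n) × Fin (a j) // z.1 = i} ≃ Fin (a i) :=
    { toFun := fun p => Fin.cast (congrArg a p.2) p.1.2
      invFun := fun k => ⟨⟨i, k⟩, rfl⟩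
      left_inv := by rintro ⟨⟨j, k⟩, h⟩; cases h; rfl
      right_inv := fun k => rfl }
  rw [Nat.card_congr e, Nat.card_eq_fintype_card, Fintype.card_fin]

lemma cnt_eq_of_wt_preserving {S T : WSet n} (φ : S ⟶ T) (h : TW T ≤ TW S) : cnt S = cnt T := by
  funext i
  apply Nat.card_congr
  exact { toFun := fun p => ⟨φ.1 p.1, by rw [wt_eq_of_tw φ h p.1]; exact p.2⟩
          invFun := fun p => ⟨φ.1.symm p.1, by
            have := wt_eq_of_tw φ h (φ.1.symm p.1)
            rw [Equiv.apply_symm_apply] at this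
            rw [← this]; exact p.2⟩
          left_inv := fun p => Subtype.ext (φ.1.symm_apply_apply p.1)
          right_inv := fun p => Subtype.ext (φ.1.apply_symm_apply p.1) }

noncomputable def fibEquiv (S : WSet n) (i : Fin n) : Fin (cnt S i) ≃ {z : S.carrier // S.wt z = i} := by
  letI := Fintype.ofFinite {z : S.carrier // S.wt z = i}
  exact (Fintype.equivFinOfCardEq (by rw [← Nat.card_eq_fintype_card]; rfl)).symm

noncomputable def stdEquiv (S : WSet n) : ((i : Fin n) × Fin (cnt S i)) ≃ S.carrier :=
  (Equiv.sigmaCongrRight (fibEquiv S)).trans (Equiv.sigmaFiberEquiv S.wt)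

lemma wt_stdEquiv (S : WSet n) (p : (i : Fin n) × Fin (cnt S i)) :
    S.wt (stdEquiv S p) = p.1 := by
  obtain ⟨i, k⟩ := p
  exact (fibEquiv S i k).2

/-- Every weighted set is isomorphic to a standard one. -/
noncomputable def stdHom (S : WSet n) : stdW n (cnt S) ⟶ S :=
  ⟨stdEquiv S, fun p => le_of_eq (wt_stdEquiv S p).symm⟩

lemma tw_eq_of_ptwise {S T : WSet n} (φ : S ⟶ T) (h : ∀ z, T.wt (φ.1 z) = S.wt z) :
    TW S = TW T := by
  letI := Fintype.ofFinite S.carrier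
  letI := Fintype.ofFinite T.carrier
  show ∑ z, ((S.wt z : ℕ) + 1) = ∑ z, ((T.wt z : ℕ) + 1)
  rw [← Equiv.sum_comp φ.1 (fun y => (T.wt y : ℕ) + 1)]
  exact Finset.sum_congr rfl (fun z _ => by rw [h z])

lemma tw_stdHom (S : WSet n) : TW (stdW n (cnt S)) = TW S :=
  tw_eq_of_ptwise (stdHom S) (fun p => wt_stdEquiv S p)

/-- Inverse of the standardisation morphism. -/
noncomputable def stdInv (S : WSet n) : S ⟶ stdW n (cnt S) :=
  minv (stdHom S) (le_of_eq (tw_stdHom S).symm)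

@[simp] lemma stdHom_stdInv (S : WSet n) : stdHom S ≫ stdInv S = 𝟙 _ := comp_minv _ _
@[simp] lemma stdInv_stdHom (S : WSet n) : stdInv S ≫ stdHom S = 𝟙 _ := minv_comp _ _

/-- The preorder on weight vectors: a morphism of standard objects exists. -/
def Rle (n : ℕ) (a b : Fin n → ℕ) : Prop := Nonempty (stdW n a ⟶ stdW n b)

lemma Rle.refl (a : Fin n → ℕ) : Rle n a a := ⟨𝟙 _⟩

lemma Rle.trans {a b c : Fin n → ℕ} (h1 : Rle n a b) (h2 : Rle n b c) : Rle n a c :=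
  ⟨h1.some ≫ h2.some⟩

lemma Rle.eq_of_tw {a b : Fin n → ℕ} (h : Rle n a b) (htw : TW (stdW n b) ≤ TW (stdW n a)) :
    a = b := by
  rw [← cnt_stdW (n := n) a, ← cnt_stdW (n := n) b]
  exact cnt_eq_of_wt_preserving h.some htw

lemma sum_eq_of_rle {a b : Fin n → ℕ} (h : Rle n a b) : ∑ i, b i = ∑ i, a i := by
  obtain ⟨φ⟩ := h
  have e : ((i : Fin n) × Fin (a i)) ≃ ((i : Fin n) × Fin (b i)) := φ.1
  have := Fintype.card_congr e
  simpa [Fintype.card_sigma] using this.symm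

lemma finite_sum_eq (m : ℕ) : {b : Fin n → ℕ | ∑ i, b i = m}.Finite := by
  apply Set.Finite.subset (Set.Finite.pi (fun i : Fin n => Set.finite_Icc 0 m))
  intro b hb
  simp only [Set.mem_pi, Set.mem_univ, Set.mem_Icc, forall_true_left]
  intro i
  refine ⟨Nat.zero_le _, ?_⟩
  rw [← hb]
  exact Finset.single_le_sum (fun j _ => Nat.zero_le (b j)) (Finset.mem_univ i)

lemma finite_rle_from (a : Fin n → ℕ) : {b : Fin n → ℕ | Rle n a b}.Finite :=
  (finite_sum_eq (∑ i, a i)).subset (fun b hb => sum_eq_of_rle hb)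

lemma finite_rle_to (a : Fin n → ℕ) : {b : Fin n → ℕ | Rle n b a}.Finite :=
  (finite_sum_eq (∑ i, a i)).subset (fun b hb => (sum_eq_of_rle hb).symm)

section ModUBasics

/-- Auxiliary: homs of `FGModuleCat` are linear maps. -/
def toLin {X Y : FGModuleCat ℂ} (f : X ⟶ Y) : X →ₗ[ℂ] Y := f.hom.hom

@[simp] lemma toLin_apply {X Y : FGModuleCat ℂ} (f : X ⟶ Y) (v : X) : toLin f v = f v := rfl

/-- Auxiliary: linear maps as homs of `FGModuleCat`. -/
def ofLin {X Y : FGModuleCat ℂ} (l : X →ₗ[ℂ] Y) : X ⟶ Y := ObjectProperty.homMk (ModuleCat.ofHom l)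

lemma fg_comp_apply {X Y Z : FGModuleCat ℂ} (f : X ⟶ Y) (g : Y ⟶ Z) (v : X) :
    (f ≫ g) v = g (f v) := rfl

lemma fg_id_apply {X : FGModuleCat ℂ} (v : X) : (𝟙 X : X ⟶ X) v = v := rfl

/-- The support of a `ModU n` object. -/
def SuppSet (M : ModU n) : Set (Fin n → ℕ) :=
  {a | ¬ Subsingleton (M.obj.obj (stdW n a))}

lemma suppSet_finite (M : ModU n) : (SuppSet M).Finite := M.property

/-- Transport of subsingletonness along the standardisation. -/
lemma subsingleton_of_std (M : ModU n) (S : WSet n)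
    (h : Subsingleton (M.obj.obj (stdW n (cnt S)))) : Subsingleton (M.obj.obj S) := by
  constructor
  intro u v
  have hsur : ∀ w : M.obj.obj S, w = M.obj.map (stdHom S) (M.obj.map (stdInv S) w) := by
    intro w
    rw [← fg_comp_apply, ← M.obj.map_comp, stdInv_stdHom, M.obj.map_id, fg_id_apply]
  rw [hsur u, hsur v, Subsingleton.elim (M.obj.map (stdInv S) u) (M.obj.map (stdInv S) v)]

lemma mem_supp_of_not_subsingleton (M : ModU n) (S : WSet n)
    (h : ¬ Subsingleton (M.obj.obj S)) : cnt S ∈ SuppSet M :=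
  fun hs => h (subsingleton_of_std M S hs)

/-- The zero `𝒰`-module. -/
noncomputable def Zmod : ModU n :=
  ⟨{ obj := fun _ => FGModuleCat.of ℂ (ULift (Fin 0 → ℂ))
     map := fun _ => 𝟙 _
     map_id := fun _ => rfl
     map_comp := fun _ _ => rfl },
   Set.Finite.subset Set.finite_empty (fun a ha => False.elim (ha (by
      show Subsingleton (ULift (Fin 0 → ℂ)); infer_instance)))⟩

instance zmod_subsingleton (S : WSet n) : Subsingleton ((Zmod (n := n)).obj.obj S) := by
  show Subsingleton (ULift (Fin 0 → ℂ))
  infer_instance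

/-- The zero morphism between `ModU` objects. -/
noncomputable def zeroHom (A B : ModU n) : A ⟶ B :=
  ObjectProperty.homMk
  { app := fun S => ofLin ((0 : A.obj.obj S →ₗ[ℂ] B.obj.obj S))
    naturality := fun S T φ =>
      FGModuleCat.hom_ext (LinearMap.ext fun v => (map_zero (toLin (B.obj.map φ))).symm) }

@[simp] lemma zeroHom_app (A B : ModU n) (S : WSet n) (v : A.obj.obj S) :
    (zeroHom A B).app S v = 0 := rfl

/-- Kernel of a `ModU` morphism, as a `ModU` object. -/
noncomputable def kerMod {A B : ModU n} (f : A ⟶ B) : ModU n :=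
  ⟨{ obj := fun S => FGModuleCat.of ℂ ↥(LinearMap.ker (toLin (f.app S)))
     map := fun {S T} φ => ofLin ((toLin (A.obj.map φ)).restrict (p := LinearMap.ker (toLin (f.app S)))
        (q := LinearMap.ker (toLin (f.app T))) (fun v hv => by
          simp only [LinearMap.mem_ker] at hv ⊢
          have h1 : (A.obj.map φ ≫ f.app T) v = (f.app S ≫ B.obj.map φ) v := by
            rw [f.naturality φ]
          have h2 : (f.app T) ((A.obj.map φ) v) = (B.obj.map φ) ((f.app S) v) := h1
          show (f.app T) ((A.obj.map φ) v) = 0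
          rw [h2, show (f.app S) v = 0 from hv, map_zero]))
     map_id := fun S => by
        apply FGModuleCat.hom_ext; apply LinearMap.ext; intro v; apply Subtype.ext
        show toLin (A.obj.map (𝟙 S)) v.1 = v.1
        rw [A.obj.map_id]; rfl
     map_comp := fun {S T U} φ ψ => by
        apply FGModuleCat.hom_ext; apply LinearMap.ext; intro v; apply Subtype.ext
        show toLin (A.obj.map (φ ≫ ψ)) v.1 = toLin (A.obj.map ψ) (toLin (A.obj.map φ) v.1)
        rw [A.obj.map_comp]; rfl },
   by
    apply Set.Finite.subset (suppSet_finite A)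
    intro a ha
    simp only [Set.mem_setOf_eq] at ha ⊢
    intro hsub
    exact ha (by
      constructor
      intro u v
      apply Subtype.ext
      exact Subsingleton.elim (α := A.obj.obj (stdW n a)) u.1 v.1)⟩

/-- Inclusion of the kernel. -/
noncomputable def kerIncl {A B : ModU n} (f : A ⟶ B) : kerMod f ⟶ A :=
  ObjectProperty.homMk
  { app := fun S => ofLin ((LinearMap.ker (toLin (f.app S))).subtype)
    naturality := fun S T φ => rfl }

lemma app_injective_of_mono {A B : ModU n} (f : A ⟶ B) [Mono f] (S : WSet n) :
    Function.Injective (f.app S) := by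
  have h1 : kerIncl f ≫ f = zeroHom (kerMod f) B := by
    apply ObjectProperty.hom_ext; apply NatTrans.ext
    funext T
    apply FGModuleCat.hom_ext; apply LinearMap.ext
    intro v
    show f.app T v.1 = 0
    exact v.2
  have h2 : kerIncl f = zeroHom (kerMod f) A := by
    rw [← cancel_mono f, h1]
    apply ObjectProperty.hom_ext; apply NatTrans.ext
    funext T
    apply FGModuleCat.hom_ext; apply LinearMap.ext
    intro v
    exact (map_zero (toLin (f.app T))).symm
  have hinj : Function.Injective (toLin (f.app S)) := by
    rw [← LinearMap.ker_eq_bot (f := toLin (f.app S)), Submodule.eq_bot_iff]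
    intro v hv
    exact congrArg (fun (g : kerMod f ⟶ A) => g.app S ⟨v, hv⟩) h2
  exact hinj

/-- Cokernel of a `ModU` morphism. -/
noncomputable def cokerMod {A B : ModU n} (f : A ⟶ B) : ModU n :=
  ⟨{ obj := fun S => FGModuleCat.of ℂ (B.obj.obj S ⧸ LinearMap.range (toLin (f.app S)))
     map := fun {S T} φ => ofLin (Submodule.mapQ _ _ (toLin (B.obj.map φ)) (by
        rintro v ⟨u, rfl⟩
        refine ⟨A.obj.map φ u, ?_⟩
        have h1 : (A.obj.map φ ≫ f.app T) u = (f.app S ≫ B.obj.map φ) u := by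
          rw [f.naturality φ]
        exact h1))
     map_id := fun S => by
        apply FGModuleCat.hom_ext; apply Submodule.linearMap_qext
        apply LinearMap.ext; intro v
        show Submodule.Quotient.mk (toLin (B.obj.map (𝟙 S)) v) = _
        rw [B.obj.map_id]
        rfl
     map_comp := fun {S T U} φ ψ => by
        apply FGModuleCat.hom_ext; apply Submodule.linearMap_qext
        apply LinearMap.ext; intro v
        show Submodule.Quotient.mk (toLin (B.obj.map (φ ≫ ψ)) v)
          = Submodule.Quotient.mk (toLin (B.obj.map ψ) (toLin (B.obj.map φ) v))
        rw [B.obj.map_comp]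
        rfl },
   by
    apply Set.Finite.subset (suppSet_finite B)
    intro a ha
    simp only [Set.mem_setOf_eq] at ha ⊢
    intro hsub
    refine ha ?_
    constructor
    intro u v
    obtain ⟨u', rfl⟩ := Submodule.Quotient.mk_surjective _ u
    obtain ⟨v', rfl⟩ := Submodule.Quotient.mk_surjective _ v
    rw [Subsingleton.elim (α := B.obj.obj (stdW n a)) u' v']⟩

/-- Projection onto the cokernel. -/
noncomputable def cokerProj {A B : ModU n} (f : A ⟶ B) : B ⟶ cokerMod f :=
  ObjectProperty.homMk
  { app := fun S => ofLin ((LinearMap.range (toLin (f.app S))).mkQ)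
    naturality := fun S T φ => FGModuleCat.hom_ext (LinearMap.ext fun v => rfl) }

lemma app_surjective_of_epi {A B : ModU n} (f : A ⟶ B) [Epi f] (S : WSet n) :
    Function.Surjective (f.app S) := by
  have h1 : f ≫ cokerProj f = zeroHom A (cokerMod f) := by
    apply ObjectProperty.hom_ext; apply NatTrans.ext
    funext T
    apply FGModuleCat.hom_ext; apply LinearMap.ext
    intro v
    show Submodule.Quotient.mk (f.app T v) = 0
    rw [Submodule.Quotient.mk_eq_zero]
    exact ⟨v, rfl⟩
  have h2 : cokerProj f = zeroHom B (cokerMod f) := by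
    rw [← cancel_epi f, h1]
    apply ObjectProperty.hom_ext; apply NatTrans.ext
    funext T
    apply FGModuleCat.hom_ext; apply LinearMap.ext
    intro v
    rfl
  intro w
  have h3 : ((LinearMap.range (toLin (f.app S))).mkQ) w = 0 :=
    congrArg (fun (g : B ⟶ cokerMod f) => g.app S w) h2
  rw [Submodule.mkQ_apply, Submodule.Quotient.mk_eq_zero] at h3
  exact h3

end ModUBasics

section WMachine

variable (N : WSet n ⥤ FGModuleCat ℂ) (x : WSet n)

/-- The submodule of equivariant finitely-supported functions on `Hom(x, S)`. -/
def WSub (S : WSet n) : Submodule ℂ ((x ⟶ S) →₀ N.obj x) where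
  carrier := {f | ∀ (b : x ⟶ x) (g : x ⟶ S), N.map b (f (b ≫ g)) = f g}
  add_mem' := fun {f1 f2} hf1 hf2 b g => by
    simp only [Finsupp.add_apply, map_add, hf1 b g, hf2 b g]
  zero_mem' := fun b g => by simp
  smul_mem' := fun c f hf b g => by
    simp only [Finsupp.smul_apply, map_smul, hf b g]

instance finsuppFinite (α : Type) [Finite α] (V : FGModuleCat ℂ) :
    Module.Finite ℂ (α →₀ V) :=
  Module.Finite.equiv (Finsupp.linearEquivFunOnFinite ℂ V α).symm

lemma wsub_mapsTo {S T : WSet n} (φ : S ⟶ T) :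
    ∀ f ∈ WSub N x S, Finsupp.mapDomain (fun g : x ⟶ S => g ≫ φ) f ∈ WSub N x T := by
  intro f hf b h
  by_cases hr : ∃ g : x ⟶ S, g ≫ φ = h
  · obtain ⟨g, rfl⟩ := hr
    have e1 : b ≫ g ≫ φ = (fun g : x ⟶ S => g ≫ φ) (b ≫ g) := (Category.assoc _ _ _).symm
    rw [e1, Finsupp.mapDomain_apply (comp_right_inj φ),
      Finsupp.mapDomain_apply (comp_right_inj φ)]
    exact hf b g
  · have h1 : h ∉ Set.range (fun g : x ⟶ S => g ≫ φ) := by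
      rintro ⟨g, hg⟩; exact hr ⟨g, hg⟩
    have h2 : (b ≫ h) ∉ Set.range (fun g : x ⟶ S => g ≫ φ) := by
      rintro ⟨g, hg⟩
      refine hr ⟨einv b ≫ g, ?_⟩
      rw [Category.assoc, show g ≫ φ = b ≫ h from hg, ← Category.assoc, einv_comp,
        Category.id_comp]
    rw [Finsupp.mapDomain_notin_range _ _ h1, Finsupp.mapDomain_notin_range _ _ h2, map_zero]

/-- The projective generator attached to `x` with coefficients from `N`. -/
@[reducible] noncomputable def Wfun : WSet n ⥤ FGModuleCat ℂ where
  obj S := FGModuleCat.of ℂ ↥(WSub N x S)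
  map {S T} φ := ofLin ((Finsupp.lmapDomain (N.obj x) ℂ (fun g : x ⟶ S => g ≫ φ)).restrict
      (p := WSub N x S) (q := WSub N x T) (fun f hf => wsub_mapsTo N x φ f hf))
  map_id S := by
    apply FGModuleCat.hom_ext; apply LinearMap.ext; intro f; apply Subtype.ext
    show Finsupp.mapDomain (fun g : x ⟶ S => g ≫ 𝟙 S) f.1 = f.1
    rw [show (fun g : x ⟶ S => g ≫ 𝟙 S) = id from funext fun g => Category.comp_id g,
      Finsupp.mapDomain_id]
  map_comp {S T U} φ ψ := by
    apply FGModuleCat.hom_ext; apply LinearMap.ext; intro f; apply Subtype.ext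
    show Finsupp.mapDomain (fun g : x ⟶ S => g ≫ (φ ≫ ψ)) f.1
      = Finsupp.mapDomain (fun g : x ⟶ T => g ≫ ψ) (Finsupp.mapDomain (fun g : x ⟶ S => g ≫ φ) f.1)
    rw [show (fun g : x ⟶ S => g ≫ (φ ≫ ψ))
        = (fun g : x ⟶ T => g ≫ ψ) ∘ (fun g : x ⟶ S => g ≫ φ) from
        funext fun g => (Category.assoc g φ ψ).symm,
      Finsupp.mapDomain_comp]

@[simp] lemma wfun_map_coe {S T : WSet n} (φ : S ⟶ T) (f : ↥(WSub N x S)) :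
    (((Wfun N x).map φ) f).1 = Finsupp.mapDomain (fun g : x ⟶ S => g ≫ φ) f.1 := rfl

variable (N' : WSet n ⥤ FGModuleCat ℂ)

/-- The morphism `W(x, N) ⟶ N'` attached to a linear map `N x ⟶ N' x`. -/
noncomputable def WtoApp (lam : N.obj x →ₗ[ℂ] N'.obj x) (S : WSet n) :
    ↥(WSub N x S) →ₗ[ℂ] N'.obj S :=
  (Finsupp.lsum ℂ (fun g : x ⟶ S => (toLin (N'.map g)).comp lam)).comp
    ((WSub N x S).subtype)

lemma wtoApp_apply (lam : N.obj x →ₗ[ℂ] N'.obj x) (S : WSet n) (f : ↥(WSub N x S)) :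
    WtoApp N x N' lam S f = f.1.sum (fun g v => N'.map g (lam v)) := rfl

lemma wtoApp_apply' (lam : N.obj x →ₗ[ℂ] N'.obj x) (S : WSet n) [Fintype (x ⟶ S)]
    (f : ↥(WSub N x S)) :
    WtoApp N x N' lam S f = ∑ g : x ⟶ S, N'.map g (lam (f.1 g)) := by
  rw [wtoApp_apply]
  exact Finsupp.sum_fintype _ _ (fun g => by simp)

lemma wto_natural (lam : N.obj x →ₗ[ℂ] N'.obj x) {S T : WSet n} (φ : S ⟶ T)
    (f : ↥(WSub N x S)) :
    WtoApp N x N' lam T ((Wfun N x).map φ f) = N'.map φ (WtoApp N x N' lam S f) := by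
  rw [wtoApp_apply, wtoApp_apply, wfun_map_coe]
  rw [Finsupp.sum_mapDomain_index (by intro b; simp) (by intro b m1 m2; simp [map_add])]
  rw [map_finsuppSum]
  apply Finsupp.sum_congr
  intro g _
  show N'.map (g ≫ φ) (lam (f.1 g)) = N'.map φ (N'.map g (lam (f.1 g)))
  rw [N'.map_comp]
  rfl

/-- The natural transformation `W(x,N) ⟶ N'` induced by `lam`. -/
noncomputable def Wto (lam : N.obj x →ₗ[ℂ] N'.obj x) : Wfun N x ⟶ N' :=
  { app := fun S => ofLin (WtoApp N x N' lam S)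
    naturality := fun S T φ => FGModuleCat.hom_ext (LinearMap.ext fun f => wto_natural N x N' lam φ f) }

/-- The augmentation `W(x,N) ⟶ N`. -/
noncomputable def Weps : Wfun N x ⟶ N := Wto N x N LinearMap.id

/-- The `δ`-element construction. -/
noncomputable def deltaLin : N.obj x →ₗ[ℂ] ((x ⟶ x) →₀ N.obj x) :=
  { toFun := fun v => Finsupp.equivFunOnFinite.symm (fun a : x ⟶ x => N.map (einv a) v)
    map_add' := fun u v => by
      apply Finsupp.ext; intro a
      show N.map (einv a) (u + v) = (N.map (einv a) u) + (N.map (einv a) v)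
      rw [map_add]
    map_smul' := fun c v => by
      apply Finsupp.ext; intro a
      show N.map (einv a) (c • v) = c • (N.map (einv a) v)
      rw [map_smul] }

@[simp] lemma deltaLin_apply (v : N.obj x) (a : x ⟶ x) :
    deltaLin N x v a = N.map (einv a) v := rfl

lemma deltaLin_mem (v : N.obj x) : deltaLin N x v ∈ WSub N x x := by
  intro b g
  rw [deltaLin_apply, deltaLin_apply, ← fg_comp_apply, ← N.map_comp, einv_comp_eq,
    Category.assoc, einv_comp, Category.comp_id]

/-- `δ` with values in the equivariant submodule. -/
noncomputable def deltaW : N.obj x →ₗ[ℂ] ↥(WSub N x x) :=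
  (deltaLin N x).codRestrict (WSub N x x) (deltaLin_mem N x)

@[simp] lemma deltaW_coe (v : N.obj x) : (deltaW N x v).1 = deltaLin N x v := rfl

/-- Order of the endomorphism group. -/
noncomputable def cEnd (x : WSet n) : ℕ := Nat.card (x ⟶ x)

lemma cEnd_ne_zero (x : WSet n) : (cEnd x : ℂ) ≠ 0 := by
  have hne : Nonempty (x ⟶ x) := ⟨𝟙 x⟩
  have h : 0 < cEnd x := Nat.card_pos
  exact Nat.cast_ne_zero.mpr h.ne'


lemma delta_natural (b : x ⟶ x) (v : N.obj x) :
    deltaW N x (N.map b v) = (Wfun N x).map b (deltaW N x v) := by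
  apply Subtype.ext
  rw [wfun_map_coe, deltaW_coe, deltaW_coe]
  apply Finsupp.ext; intro a
  have ha : (fun c : x ⟶ x => c ≫ b) (a ≫ einv b) = a := by
    show (a ≫ einv b) ≫ b = a
    rw [Category.assoc, einv_comp, Category.comp_id]
  show N.map (einv a) (N.map b v)
    = (Finsupp.mapDomain (fun c : x ⟶ x => c ≫ b) (deltaLin N x v)) a
  conv_rhs => rw [← ha]
  rw [Finsupp.mapDomain_apply (comp_right_inj b), deltaLin_apply, einv_comp_eq, einv_einv,
    ← fg_comp_apply, ← N.map_comp]

lemma minv_comp_eq {S T U : WSet n} (φ : S ⟶ T) (ψ : T ⟶ U) {h1 : TW T ≤ TW S}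
    {h2 : TW U ≤ TW T} {h3 : TW U ≤ TW S} :
    minv (φ ≫ ψ) h3 = minv ψ h2 ≫ minv φ h1 := Subtype.ext (Equiv.ext fun z => rfl)

lemma nmap_left_inverse {S T : WSet n} (φ : S ⟶ T) (htw : TW T ≤ TW S) (w : N.obj S) :
    N.map (minv φ htw) (N.map φ w) = w := by
  rw [← fg_comp_apply, ← N.map_comp, comp_minv, N.map_id, fg_id_apply]

lemma nmap_injective {S T : WSet n} (φ : S ⟶ T) (htw : TW T ≤ TW S) :
    Function.Injective (N.map φ) := by
  intro w w' h
  rw [← nmap_left_inverse N φ htw w, ← nmap_left_inverse N φ htw w', h]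

/-- The key summation identity: summing the pushforwards of the `δ`-elements of the values
of an equivariant element recovers the element, `|End x|` times. -/
lemma sum_wmap_delta {S : WSet n} [Fintype (x ⟶ S)] (f : ↥(WSub N x S)) :
    ∑ g : x ⟶ S, ((Wfun N x).map g) (deltaW N x (f.1 g)) = (cEnd x : ℂ) • f := by
  classical
  letI := Fintype.ofFinite (x ⟶ x)
  apply Subtype.ext
  rw [Submodule.coe_smul]
  rw [AddSubmonoidClass.coe_finset_sum]
  apply Finsupp.ext; intro h
  rw [Finsupp.finset_sum_apply, Finsupp.smul_apply]
  set i' : (x ⟶ x) → (x ⟶ S) := fun a => einv a ≫ h with hi'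
  have inj : Function.Injective i' := by
    intro a a' hh
    have h1 : einv a = einv a' := comp_right_inj h hh
    rw [← einv_einv a, ← einv_einv a', h1]
  have hval : ∀ a : x ⟶ x,
      (((Wfun N x).map (i' a)) (deltaW N x (f.1 (i' a)))).1 h = f.1 h := by
    intro a
    rw [wfun_map_coe, deltaW_coe]
    have hh2 : (fun c : x ⟶ x => c ≫ (i' a)) a = h := by
      show a ≫ einv a ≫ h = h
      rw [← Category.assoc, comp_einv, Category.id_comp]
    conv_lhs => rw [← hh2]
    rw [Finsupp.mapDomain_apply (comp_right_inj _), deltaLin_apply]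
    exact f.2 (einv a) h
  have hzero : ∀ g : x ⟶ S, g ∉ Finset.univ.image i' →
      (((Wfun N x).map g) (deltaW N x (f.1 g))).1 h = 0 := by
    intro g hg
    rw [wfun_map_coe, deltaW_coe]
    apply Finsupp.mapDomain_notin_range
    rintro ⟨a, ha⟩
    apply hg
    rw [Finset.mem_image]
    refine ⟨a, Finset.mem_univ a, ?_⟩
    show einv a ≫ h = g
    rw [← ha]
    show einv a ≫ (fun c : x ⟶ x => c ≫ g) a = g
    show einv a ≫ (a ≫ g) = g
    rw [← Category.assoc, einv_comp, Category.id_comp]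
  rw [← Finset.sum_subset (Finset.subset_univ (Finset.univ.image i')) (fun g _ hgm => hzero g hgm)]
  rw [Finset.sum_image (fun a _ a' _ hh => inj hh)]
  rw [Finset.sum_congr rfl (fun a _ => hval a), Finset.sum_const, Finset.card_univ]
  rw [Nat.cast_smul_eq_nsmul ℂ (cEnd x) (f.1 h)]
  congr 1
  rw [cEnd, Nat.card_eq_fintype_card]

/-- Transpose of a morphism out of `W(x,N)`. -/
noncomputable def toLam (η : Wfun N x ⟶ N') : N.obj x →ₗ[ℂ] N'.obj x :=
  (cEnd x : ℂ)⁻¹ • ((toLin (η.app x)).comp (deltaW N x))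

lemma wto_toLam (η : Wfun N x ⟶ N') (S : WSet n) (f : ↥(WSub N x S)) :
    WtoApp N x N' (toLam N x N' η) S f = η.app S f := by
  letI := Fintype.ofFinite (x ⟶ S)
  rw [wtoApp_apply']
  have hterm : ∀ g : x ⟶ S, N'.map g (toLam N x N' η (f.1 g))
      = (cEnd x : ℂ)⁻¹ • η.app S ((Wfun N x).map g (deltaW N x (f.1 g))) := by
    intro g
    show N'.map g (((cEnd x : ℂ)⁻¹ • ((toLin (η.app x)).comp (deltaW N x))) (f.1 g)) = _
    rw [LinearMap.smul_apply, map_smul]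
    congr 1
    show N'.map g (η.app x (deltaW N x (f.1 g))) = _
    rw [← fg_comp_apply, ← η.naturality g, fg_comp_apply]
  rw [Finset.sum_congr rfl (fun g _ => hterm g), ← Finset.smul_sum, ← map_sum,
    sum_wmap_delta, map_smul, smul_smul, inv_mul_cancel₀ (cEnd_ne_zero x), one_smul]

lemma toLam_equiv (η : Wfun N x ⟶ N') (b : x ⟶ x) (v : N.obj x) :
    toLam N x N' η (N.map b v) = N'.map b (toLam N x N' η v) := by
  show (cEnd x : ℂ)⁻¹ • (η.app x (deltaW N x (N.map b v)))
    = N'.map b ((cEnd x : ℂ)⁻¹ • (η.app x (deltaW N x v)))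
  rw [map_smul, delta_natural]
  congr 1
  show η.app x ((Wfun N x).map b (deltaW N x v)) = N'.map b (η.app x (deltaW N x v))
  rw [← fg_comp_apply, η.naturality b, fg_comp_apply]

lemma wto_comp (N1 N2 : WSet n ⥤ FGModuleCat ℂ) (lam : N.obj x →ₗ[ℂ] N1.obj x)
    (e : N1 ⟶ N2) (S : WSet n) (f : ↥(WSub N x S)) :
    e.app S (WtoApp N x N1 lam S f) = WtoApp N x N2 ((toLin (e.app x)).comp lam) S f := by
  letI := Fintype.ofFinite (x ⟶ S)
  rw [wtoApp_apply', wtoApp_apply', map_sum]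
  apply Finset.sum_congr rfl
  intro g _
  show e.app S (N1.map g (lam (f.1 g))) = N2.map g (e.app x (lam (f.1 g)))
  rw [← fg_comp_apply, e.naturality g]
  rfl

/-- Composition with a weight-preserving morphism as a bijection of hom-sets. -/
def transEquiv {x S : WSet n} (u : x ⟶ S) (htw : TW S ≤ TW x) : (x ⟶ x) ≃ (x ⟶ S) where
  toFun a := a ≫ u
  invFun g := g ≫ minv u htw
  left_inv a := by show (a ≫ u) ≫ minv u htw = a; rw [Category.assoc, comp_minv, Category.comp_id]
  right_inv g := by show (g ≫ minv u htw) ≫ u = g; rw [Category.assoc, minv_comp, Category.comp_id]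

@[simp] lemma transEquiv_apply {x S : WSet n} (u : x ⟶ S) (htw : TW S ≤ TW x) (a : x ⟶ x) :
    transEquiv u htw a = a ≫ u := rfl

/-- Torsor case: if all morphisms `x ⟶ S` preserve total weight, the augmentation is
injective at `S`. -/
lemma weps_injective (S : WSet n) (htw : TW S ≤ TW x) :
    Function.Injective ((Weps N x).app S) := by
  have hker : ∀ f : ↥(WSub N x S), (Weps N x).app S f = 0 → f = 0 := by
    intro f hf
    by_cases hne : Nonempty (x ⟶ S)
    · obtain ⟨u⟩ := hne
      letI := Fintype.ofFinite (x ⟶ S)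
      set uinv : S ⟶ x := minv u htw with huinv
      have key : (0 : N.obj S) = (Fintype.card (x ⟶ S)) • (N.map u (f.1 u)) := by
        rw [← hf]
        show WtoApp N x N LinearMap.id S f = _
        rw [wtoApp_apply']
        letI := Fintype.ofFinite (x ⟶ x)
        rw [← Equiv.sum_comp (transEquiv u htw)
          (fun g : x ⟶ S => N.map g ((LinearMap.id : N.obj x →ₗ[ℂ] N.obj x) (f.1 g)))]
        have hterm : ∀ a : x ⟶ x,
            (fun g : x ⟶ S => N.map g ((LinearMap.id : N.obj x →ₗ[ℂ] N.obj x) (f.1 g)))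
              ((transEquiv u htw) a) = N.map u (f.1 u) := by
          intro a
          show N.map (a ≫ u) (f.1 (a ≫ u)) = N.map u (f.1 u)
          rw [show f.1 u = N.map a (f.1 (a ≫ u)) from (f.2 a u).symm, N.map_comp]
          rfl
        rw [Finset.sum_congr rfl (fun a _ => hterm a), Finset.sum_const, Finset.card_univ,
          Fintype.card_congr (transEquiv u htw)]
      haveI : Nonempty (x ⟶ S) := ⟨u⟩
      have hcard : (Fintype.card (x ⟶ S) : ℂ) ≠ 0 := by
        have : 0 < Fintype.card (x ⟶ S) := Fintype.card_pos
        exact Nat.cast_ne_zero.mpr this.ne'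
      have h0 : N.map u (f.1 u) = 0 := by
        have h1 : (Fintype.card (x ⟶ S) : ℂ) • (N.map u (f.1 u)) = 0 := by
          rw [Nat.cast_smul_eq_nsmul ℂ, ← key]
        rcases smul_eq_zero.mp h1 with h | h
        · exact absurd h hcard
        · exact h
      have hfu : f.1 u = 0 := by
        have := nmap_injective N u htw (by rw [h0, map_zero] : N.map u (f.1 u) = N.map u 0)
        exact this
      apply Subtype.ext
      apply Finsupp.ext; intro g
      have hg : (g ≫ uinv) ≫ u = g := by rw [Category.assoc, minv_comp, Category.comp_id]
      have h2 := f.2 (g ≫ uinv) u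
      rw [hg] at h2
      have h3 : N.map (g ≫ uinv) (f.1 g) = 0 := by rw [h2, hfu]
      have := nmap_injective N (g ≫ uinv) le_rfl (by rw [h3, map_zero] : N.map (g ≫ uinv) (f.1 g) = N.map (g ≫ uinv) 0)
      exact this
    · apply Subtype.ext
      apply Finsupp.ext; intro g
      exact absurd ⟨g⟩ hne
  intro f1 f2 h12
  have h := hker (f1 - f2) (by rw [map_sub, h12, sub_self])
  exact sub_eq_zero.mp h

/-- Torsor case: if some morphism `x ⟶ S` exists and all preserve total weight,
the augmentation is surjective at `S`. -/
lemma weps_surjective (S : WSet n) (htw : TW S ≤ TW x) (u : x ⟶ S) :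
    Function.Surjective ((Weps N x).app S) := by
  intro m
  letI := Fintype.ofFinite (x ⟶ S)
  haveI : Nonempty (x ⟶ S) := ⟨u⟩
  have hcard : (Fintype.card (x ⟶ S) : ℂ) ≠ 0 := by
    have : 0 < Fintype.card (x ⟶ S) := Fintype.card_pos (α := x ⟶ S)
    exact Nat.cast_ne_zero.mpr this.ne'
  have hmem : (Finsupp.equivFunOnFinite.symm (fun g : x ⟶ S => N.map (minv g htw) m)) ∈ WSub N x S := by
    intro b g
    show N.map b (N.map (minv (b ≫ g) htw) m) = N.map (minv g htw) m
    rw [minv_comp_eq b g (h1 := le_rfl) (h2 := htw)]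
    rw [← fg_comp_apply, ← N.map_comp, Category.assoc]
    rw [show minv b le_rfl ≫ b = 𝟙 x from minv_comp b le_rfl, Category.comp_id]
  refine ⟨(Fintype.card (x ⟶ S) : ℂ)⁻¹ • ⟨_, hmem⟩, ?_⟩
  rw [map_smul]
  show (Fintype.card (x ⟶ S) : ℂ)⁻¹ • (WtoApp N x N LinearMap.id S ⟨_, hmem⟩) = m
  rw [wtoApp_apply']
  have hterm : ∀ g : x ⟶ S,
      N.map g ((LinearMap.id : N.obj x →ₗ[ℂ] N.obj x)
        ((Finsupp.equivFunOnFinite.symm (fun g : x ⟶ S => N.map (minv g htw) m)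
          : (x ⟶ S) →₀ N.obj x) g)) = m := by
    intro g
    show N.map g (N.map (minv g htw) m) = m
    rw [← fg_comp_apply, ← N.map_comp, minv_comp, N.map_id, fg_id_apply]
  rw [Finset.sum_congr rfl (fun g _ => hterm g), Finset.sum_const, Finset.card_univ,
    ← Nat.cast_smul_eq_nsmul ℂ, smul_smul, inv_mul_cancel₀ hcard, one_smul]

end WMachine

section QConstruction

variable (M : ModU n)

/-- Index type: the support of `M`. -/
def ix : Type := ↥(SuppSet M)

noncomputable instance : Finite (ix M) := (suppSet_finite M).to_subtype

noncomputable instance ixFintype : Fintype (ix M) := Fintype.ofFinite _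

/-- The standard object attached to an index. -/
@[reducible] noncomputable def xw (a : ix M) : WSet n := stdW n a.1

lemma wsub_subsingleton (N : WSet n ⥤ FGModuleCat ℂ) (x S : WSet n)
    (h : ¬ Nonempty (x ⟶ S)) : Subsingleton ↥(WSub N x S) := by
  constructor
  intro f g
  apply Subtype.ext
  apply Finsupp.ext
  intro g'
  exact absurd ⟨g'⟩ h

instance qObFinite (S : WSet n) :
    Module.Finite ℂ (∀ a : ix M, ↥(WSub M.obj (xw M a) S)) := by
  infer_instance

/-- The covering projective object: product of the `W`'s over the support. -/
@[reducible] noncomputable def Qfun : WSet n ⥤ FGModuleCat ℂ where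
  obj S := FGModuleCat.of ℂ (∀ a : ix M, ↥(WSub M.obj (xw M a) S))
  map {S T} φ := ofLin (LinearMap.pi
    (fun a => (toLin ((Wfun M.obj (xw M a)).map φ)).comp (LinearMap.proj a)))
  map_id S := by
    apply FGModuleCat.hom_ext; apply LinearMap.ext; intro F
    funext a
    show toLin ((Wfun M.obj (xw M a)).map (𝟙 S)) (F a) = F a
    rw [(Wfun M.obj (xw M a)).map_id]
    rfl
  map_comp {S T U} φ ψ := by
    apply FGModuleCat.hom_ext; apply LinearMap.ext; intro F
    funext a
    show toLin ((Wfun M.obj (xw M a)).map (φ ≫ ψ)) (F a)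
      = toLin ((Wfun M.obj (xw M a)).map ψ) (toLin ((Wfun M.obj (xw M a)).map φ) (F a))
    rw [(Wfun M.obj (xw M a)).map_comp]
    rfl

@[simp] lemma qfun_map_apply {S T : WSet n} (φ : S ⟶ T)
    (F : ∀ a : ix M, ↥(WSub M.obj (xw M a) S)) (a : ix M) :
    ((Qfun M).map φ F) a = (Wfun M.obj (xw M a)).map φ (F a) := rfl

/-- The up-closure of the support. -/
def UPset : Set (Fin n → ℕ) := {b | ∃ a ∈ SuppSet M, Rle n a b}

lemma upset_finite : (UPset M).Finite := by
  apply Set.Finite.subset ((suppSet_finite M).biUnion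
    (fun a _ => finite_rle_from (n := n) a))
  rintro b ⟨a, ha, hr⟩
  exact Set.mem_biUnion ha hr

lemma supp_subset_upset : SuppSet M ⊆ UPset M := fun a ha => ⟨a, ha, Rle.refl a⟩

lemma qfun_subsingleton (S : WSet n)
    (h : ∀ a : ix M, ¬ Nonempty (xw M a ⟶ S)) :
    Subsingleton (∀ a : ix M, ↥(WSub M.obj (xw M a) S)) := by
  constructor
  intro F G
  funext a
  haveI := wsub_subsingleton M.obj (xw M a) S (h a)
  exact Subsingleton.elim _ _

lemma qfun_finsupp : FinSupp n (Qfun M) := by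
  apply Set.Finite.subset (upset_finite M)
  intro b hb
  simp only [Set.mem_setOf_eq] at hb
  by_contra hnb
  apply hb
  apply qfun_subsingleton
  intro a ⟨g⟩
  exact hnb ⟨a.1, a.2, ⟨g⟩⟩

/-- `Q` as an object of `ModU n`. -/
@[reducible] noncomputable def Qmod : ModU n := ⟨Qfun M, qfun_finsupp M⟩

/-- Morphisms out of `Q` from a family of linear maps. -/
noncomputable def QtoApp (N' : WSet n ⥤ FGModuleCat ℂ)
    (lams : ∀ a : ix M, M.obj.obj (xw M a) →ₗ[ℂ] N'.obj (xw M a)) (S : WSet n) :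
    (∀ a : ix M, ↥(WSub M.obj (xw M a) S)) →ₗ[ℂ] N'.obj S :=
  ∑ a, (WtoApp M.obj (xw M a) N' (lams a) S).comp (LinearMap.proj a)

lemma qtoApp_apply (N' : WSet n ⥤ FGModuleCat ℂ) (lams) (S : WSet n)
    (F : ∀ a : ix M, ↥(WSub M.obj (xw M a) S)) :
    QtoApp M N' lams S F = ∑ a, WtoApp M.obj (xw M a) N' (lams a) S (F a) := by
  show (∑ a, (WtoApp M.obj (xw M a) N' (lams a) S).comp (LinearMap.proj a)) F = _
  rw [LinearMap.sum_apply]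
  rfl

/-- The natural transformation out of `Q` from a family of linear maps. -/
noncomputable def Qto (N' : WSet n ⥤ FGModuleCat ℂ)
    (lams : ∀ a : ix M, M.obj.obj (xw M a) →ₗ[ℂ] N'.obj (xw M a)) : Qfun M ⟶ N' :=
  { app := fun S => ofLin (QtoApp M N' lams S)
    naturality := fun S T φ => by
      apply FGModuleCat.hom_ext; apply LinearMap.ext
      intro F
      show QtoApp M N' lams T ((Qfun M).map φ F) = N'.map φ (QtoApp M N' lams S F)
      rw [qtoApp_apply, qtoApp_apply, map_sum]
      apply Finset.sum_congr rfl
      intro a _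
      show WtoApp M.obj (xw M a) N' (lams a) T ((Wfun M.obj (xw M a)).map φ (F a)) = _
      rw [wto_natural] }

@[simp] lemma qto_app (N' : WSet n ⥤ FGModuleCat ℂ) (lams) (S : WSet n) :
    (Qto M N' lams).app S = ofLin (QtoApp M N' lams S) := rfl

/-- The augmentation `Q ⟶ M`. -/
noncomputable def epsQ : Qmod M ⟶ M := ObjectProperty.homMk (Qto M M.obj (fun a => LinearMap.id))

lemma epsQ_surjective (S : WSet n) : Function.Surjective ((epsQ M).app S) := by
  by_cases hs : Subsingleton (M.obj.obj S)
  · intro m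
    exact ⟨0, Subsingleton.elim _ _⟩
  · classical
    have ha : cnt S ∈ SuppSet M := mem_supp_of_not_subsingleton M S hs
    set a0 : ix M := (⟨cnt S, ha⟩ : ↥(SuppSet M)) with ha0
    intro m
    obtain ⟨w, hw⟩ := weps_surjective M.obj (stdW n (cnt S)) S
      (le_of_eq (tw_stdHom S).symm) (stdHom S) m
    refine ⟨Pi.single a0 w, ?_⟩
    show QtoApp M M.obj (fun _ => LinearMap.id) S (Pi.single a0 w) = m
    rw [qtoApp_apply]
    rw [Finset.sum_eq_single a0]
    · rw [Pi.single_eq_same]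
      exact hw
    · intro a _ hne
      rw [Pi.single_eq_of_ne hne, map_zero]
    · intro h
      exact absurd (Finset.mem_univ a0) h

/-- At a weight vector of minimal total weight, the augmentation is injective. -/
lemma epsQ_injective_at_min (b : Fin n → ℕ)
    (hmin : ∀ a : ix M, Nonempty (xw M a ⟶ stdW n b) → a.1 = b) :
    Function.Injective ((epsQ M).app (stdW n b)) := by
  classical
  have hker : ∀ F, (epsQ M).app (stdW n b) F = 0 → F = 0 := by
    intro F hF
    have hvanish : ∀ a : ix M, a.1 ≠ b → F a = 0 := by
      intro a hne
      haveI : Subsingleton ↥(WSub M.obj (xw M a) (stdW n b)) :=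
        wsub_subsingleton _ _ _ (fun hne' => hne (hmin a hne'))
      exact Subsingleton.elim _ _
    by_cases hex : ∃ a0 : ix M, a0.1 = b
    · obtain ⟨a0, ha0⟩ := hex
      have hFsum : (epsQ M).app (stdW n b) F
          = WtoApp M.obj (xw M a0) M.obj LinearMap.id (stdW n b) (F a0) := by
        show QtoApp M M.obj (fun _ => LinearMap.id) (stdW n b) F = _
        rw [qtoApp_apply]
        rw [Finset.sum_eq_single a0]
        · intro a _ hne
          rw [hvanish a (fun h => hne (Subtype.ext (h.trans ha0.symm))), map_zero]
        · intro h
          exact absurd (Finset.mem_univ a0) h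
      have htw : TW (stdW n b) ≤ TW (xw M a0) := le_of_eq (by rw [xw, ha0])
      have hinj := weps_injective M.obj (xw M a0) (stdW n b) htw
      have hF0 : F a0 = 0 := by
        apply hinj
        show WtoApp M.obj (xw M a0) M.obj LinearMap.id (stdW n b) (F a0)
          = (Weps M.obj (xw M a0)).app (stdW n b) 0
        rw [← hFsum, hF, map_zero]
      funext a
      by_cases hab : a = a0
      · rw [hab, hF0]; rfl
      · rw [hvanish a (fun h => hab (Subtype.ext (h.trans ha0.symm)))]; rfl
    · funext a
      rw [hvanish a (fun h => hex ⟨a, h⟩)]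
      rfl
  intro F1 F2 h12
  have h := hker (F1 - F2) (by rw [map_sub, h12, sub_self])
  funext a
  have := congrFun h a
  have h2 : F1 a - F2 a = 0 := this
  rw [← sub_eq_zero]
  exact h2

end QConstruction

section Projectivity

variable (M : ModU n)

/-- Inclusion of a single component into `Q`. -/
noncomputable def inclW (a : ix M) : Wfun M.obj (xw M a) ⟶ Qfun M := by
  classical
  exact
  { app := fun S => ofLin (LinearMap.single ℂ (fun a' : ix M => ↥(WSub M.obj (xw M a') S)) a)
    naturality := fun S T φ => by
      apply FGModuleCat.hom_ext; apply LinearMap.ext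
      intro w
      funext a'
      show (Pi.single a ((Wfun M.obj (xw M a)).map φ w) : ∀ a' : ix M, ↥(WSub M.obj (xw M a') T)) a'
        = (Wfun M.obj (xw M a')).map φ ((Pi.single a w : ∀ a' : ix M, ↥(WSub M.obj (xw M a') S)) a')
      by_cases h : a' = a
      · subst h
        rw [Pi.single_eq_same, Pi.single_eq_same]
      · rw [Pi.single_eq_of_ne h, Pi.single_eq_of_ne h, map_zero] }

lemma inclW_app (a : ix M) (S : WSet n) (w : ↥(WSub M.obj (xw M a) S)) :
    by classical exact (inclW M a).app S w
      = Pi.single a w := by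
  classical
  rfl

/-- Averaged lifting of equivariant maps through a pointwise surjection. -/
lemma avg_lift (x : WSet n) (N : WSet n ⥤ FGModuleCat ℂ)
    (N1 N2 : WSet n ⥤ FGModuleCat ℂ) (e : N1 ⟶ N2)
    (hsur : Function.Surjective (e.app x)) (lam' : N.obj x →ₗ[ℂ] N2.obj x)
    (hl : ∀ (b : x ⟶ x) (v : N.obj x), lam' (N.map b v) = N2.map b (lam' v)) :
    ∃ lam : N.obj x →ₗ[ℂ] N1.obj x,
      (∀ (b : x ⟶ x) (v : N.obj x), lam (N.map b v) = N1.map b (lam v)) ∧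
      ∀ v, e.app x (lam v) = lam' v := by
  letI := Fintype.ofFinite (x ⟶ x)
  obtain ⟨s, hs⟩ := (toLin (e.app x)).exists_rightInverse_of_surjective
    (LinearMap.range_eq_top.mpr hsur)
  have hs' : ∀ w, e.app x (s w) = w := fun w => LinearMap.congr_fun hs w
  have hcard : (cEnd x : ℂ) ≠ 0 := cEnd_ne_zero x
  have hcardf : (cEnd x : ℕ) = Fintype.card (x ⟶ x) := by
    rw [cEnd, Nat.card_eq_fintype_card]
  refine ⟨(cEnd x : ℂ)⁻¹ • ∑ b : x ⟶ x,
    (toLin (N1.map b)).comp ((s.comp (toLin (N2.map (einv b)))).comp lam'), ?_, ?_⟩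
  · intro b0 v
    rw [LinearMap.smul_apply, LinearMap.smul_apply, map_smul]
    congr 1
    rw [LinearMap.sum_apply, LinearMap.sum_apply, map_sum]
    rw [← Equiv.sum_comp (compEquiv b0) (fun b : x ⟶ x =>
      ((toLin (N1.map b)).comp ((s.comp (toLin (N2.map (einv b)))).comp lam')) (N.map b0 v))]
    apply Finset.sum_congr rfl
    intro c _
    show N1.map (c ≫ b0) (s (N2.map (einv (c ≫ b0)) (lam' (N.map b0 v))))
      = N1.map b0 (N1.map c (s (N2.map (einv c) (lam' v))))
    rw [hl b0 v, einv_comp_eq]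
    have h1 : N2.map (einv b0 ≫ einv c) (N2.map b0 (lam' v)) = N2.map (einv c) (lam' v) := by
      rw [← fg_comp_apply, ← N2.map_comp, ← Category.assoc, comp_einv, Category.id_comp]
    rw [h1, N1.map_comp]
    rfl
  · intro v
    rw [LinearMap.smul_apply, map_smul, LinearMap.sum_apply, map_sum]
    have hterm : ∀ b : x ⟶ x,
        e.app x (((toLin (N1.map b)).comp ((s.comp (toLin (N2.map (einv b)))).comp lam')) v)
          = lam' v := by
      intro b
      show e.app x (N1.map b (s (N2.map (einv b) (lam' v)))) = lam' v
      rw [← fg_comp_apply, e.naturality b, fg_comp_apply, hs',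
        ← fg_comp_apply, ← N2.map_comp, einv_comp, N2.map_id, fg_id_apply]
    rw [Finset.sum_congr rfl (fun b _ => hterm b), Finset.sum_const, Finset.card_univ,
      ← hcardf, ← Nat.cast_smul_eq_nsmul ℂ, smul_smul, inv_mul_cancel₀ hcard, one_smul]

/-- Determination: every morphism out of `Q` is of the form `Qto`. -/
lemma qto_determination (N' : WSet n ⥤ FGModuleCat ℂ) (f : Qfun M ⟶ N') (S : WSet n)
    (F : ∀ a : ix M, ↥(WSub M.obj (xw M a) S)) :
    QtoApp M N' (fun a => toLam M.obj (xw M a) N' (inclW M a ≫ f)) S F = f.app S F := by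
  classical
  rw [qtoApp_apply]
  have hterm : ∀ a : ix M,
      WtoApp M.obj (xw M a) N' (toLam M.obj (xw M a) N' (inclW M a ≫ f)) S (F a)
        = f.app S ((Pi.single a (F a) : ∀ a' : ix M, ↥(WSub M.obj (xw M a') S))) := by
    intro a
    rw [wto_toLam]
    rfl
  rw [Finset.sum_congr rfl (fun a _ => hterm a), ← map_sum]
  congr 1
  exact Finset.univ_sum_single F

lemma qmod_projective : Projective (Qmod M) := by
  constructor
  intro E X f e he
  -- pointwise surjectivity of e
  have hsur : ∀ S, Function.Surjective (e.app S) := fun S => app_surjective_of_epi e S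
  -- lift the transposed maps
  have hlift : ∀ a : ix M, ∃ lam : M.obj.obj (xw M a) →ₗ[ℂ] E.obj.obj (xw M a),
      (∀ (b : xw M a ⟶ xw M a) (v), lam (M.obj.map b v) = E.obj.map b (lam v)) ∧
      ∀ v, e.app (xw M a) (lam v)
        = toLam M.obj (xw M a) X.obj (inclW M a ≫ f.hom) v := by
    intro a
    exact avg_lift (xw M a) M.obj E.obj X.obj e.hom (hsur (xw M a))
      (toLam M.obj (xw M a) X.obj (inclW M a ≫ f.hom))
      (fun b v => toLam_equiv M.obj (xw M a) X.obj (inclW M a ≫ f.hom) b v)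
  choose lam hlam1 hlam2 using hlift
  refine ⟨ObjectProperty.homMk (Qto M E.obj lam), ?_⟩
  apply ObjectProperty.hom_ext; apply NatTrans.ext
  funext S
  apply FGModuleCat.hom_ext; apply LinearMap.ext
  intro F
  have key : ∀ (G : ∀ a : ix M, ↥(WSub M.obj (xw M a) S)),
      e.app S (QtoApp M E.obj lam S G) = f.app S G := by
    intro G
    have step1 : ∑ a, e.app S (WtoApp M.obj (xw M a) E.obj (lam a) S (G a))
        = QtoApp M X.obj (fun a => toLam M.obj (xw M a) X.obj (inclW M a ≫ f.hom)) S G := by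
      rw [qtoApp_apply]
      apply Finset.sum_congr rfl
      intro a _
      have hlameq : (toLin (e.app (xw M a))).comp (lam a)
          = toLam M.obj (xw M a) X.obj (inclW M a ≫ f.hom) := LinearMap.ext (hlam2 a)
      rw [wto_comp M.obj (xw M a) E.obj X.obj (lam a) e.hom S (G a), hlameq]
    calc e.app S (QtoApp M E.obj lam S G)
        = ∑ a, e.app S (WtoApp M.obj (xw M a) E.obj (lam a) S (G a)) := by
          rw [qtoApp_apply, map_sum]
      _ = QtoApp M X.obj (fun a => toLam M.obj (xw M a) X.obj (inclW M a ≫ f.hom)) S G := step1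
      _ = f.app S G := qto_determination M X.obj f.hom S G
  exact key F

/-- Modules with all values subsingleton are projective. -/
lemma projective_of_subsingleton (A : ModU n) (h : ∀ S, Subsingleton (A.obj.obj S)) :
    Projective A := by
  constructor
  intro E X f e he
  refine ⟨zeroHom A E, ?_⟩
  apply ObjectProperty.hom_ext; apply NatTrans.ext
  funext S
  apply FGModuleCat.hom_ext; apply LinearMap.ext
  intro v
  show e.app S ((zeroHom A E).app S v) = f.app S v
  rw [zeroHom_app, map_zero, show v = 0 from @Subsingleton.elim _ (h S) v 0, map_zero]

/-- Modules with all values subsingleton are injective. -/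
lemma injective_of_subsingleton (A : ModU n) (h : ∀ S, Subsingleton (A.obj.obj S)) :
    Injective A := by
  constructor
  intro E X f g hg
  refine ⟨zeroHom X A, ?_⟩
  apply ObjectProperty.hom_ext; apply NatTrans.ext
  funext S
  apply FGModuleCat.hom_ext; apply LinearMap.ext
  intro v
  show (zeroHom X A).app S (g.app S v) = f.app S v
  rw [zeroHom_app]
  exact @Subsingleton.elim _ (h S) _ _

end Projectivity

section ProjResolution

/-- Existence of a finite projective resolution. -/
def HasProjRes (M : ModU n) : Prop :=
  ∃ (l : ℕ) (P : ℕ → ModU n) (π : P 0 ⟶ M) (d : ∀ j : ℕ, P (j + 1) ⟶ P j),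
    (∀ j, Projective (P j)) ∧
    (∀ j, l < j → ∀ S : WSet n, Subsingleton ((P j).obj.obj S)) ∧
    (∀ S : WSet n, Function.Surjective (π.app S)) ∧
    (∀ S : WSet n, Set.range ((d 0).app S) = {x | π.app S x = 0}) ∧
    (∀ j, ∀ S : WSet n, Set.range ((d (j + 1)).app S) = {x | (d j).app S x = 0})

lemma hasProjRes_of_subsingleton (M : ModU n) (h : ∀ S, Subsingleton (M.obj.obj S)) :
    HasProjRes M := by
  refine ⟨0, fun _ => Zmod, zeroHom _ _, fun j => zeroHom _ _, ?_, ?_, ?_, ?_, ?_⟩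
  · intro j; exact projective_of_subsingleton Zmod (fun S => zmod_subsingleton S)
  · intro j hj S; exact zmod_subsingleton S
  · intro S y; exact ⟨0, @Subsingleton.elim _ (h S) _ _⟩
  · intro S
    apply Set.eq_of_subset_of_subset
    · rintro x ⟨y, rfl⟩
      exact @Subsingleton.elim _ (h S) _ _
    · intro x hx
      exact ⟨x, Subsingleton.elim _ _⟩
  · intro j S
    apply Set.eq_of_subset_of_subset
    · rintro x ⟨y, rfl⟩
      exact Subsingleton.elim _ _
    · intro x hx
      exact ⟨x, Subsingleton.elim _ _⟩

lemma subsingleton_of_supp_empty (M : ModU n) (h : SuppSet M = ∅) (S : WSet n) :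
    Subsingleton (M.obj.obj S) := by
  by_contra hns
  have := mem_supp_of_not_subsingleton M S hns
  rw [h] at this
  exact this

lemma hasProjRes_of_card : ∀ (N : ℕ) (M : ModU n), (UPset M).ncard ≤ N → HasProjRes M := by
  intro N
  induction N with
  | zero =>
    intro M h
    apply hasProjRes_of_subsingleton
    apply subsingleton_of_supp_empty
    have hempty : UPset M = ∅ := ((Set.ncard_eq_zero (upset_finite M)).mp (Nat.le_zero.mp h))
    apply Set.eq_empty_iff_forall_notMem.mpr
    intro a ha
    have : a ∈ UPset M := supp_subset_upset M ha
    rw [hempty] at this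
    exact this
  | succ N ih =>
    intro M hcard
    by_cases hsupp : SuppSet M = ∅
    · exact hasProjRes_of_subsingleton M (subsingleton_of_supp_empty M hsupp)
    · -- the main construction
      have hsuppK : SuppSet (kerMod (epsQ M)) ⊆ UPset M := by
        intro b hb
        by_contra hbUP
        apply hb
        have hq : Subsingleton (∀ a : ix M, ↥(WSub M.obj (xw M a) (stdW n b))) := by
          apply qfun_subsingleton
          intro a ⟨g⟩
          exact hbUP ⟨a.1, a.2, ⟨g⟩⟩
        constructor
        intro u v
        apply Subtype.ext
        exact @Subsingleton.elim _ hq _ _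
      have hne : (UPset M).Nonempty := by
        obtain ⟨a, ha⟩ := Set.nonempty_iff_ne_empty.mpr hsupp
        exact ⟨a, supp_subset_upset M ha⟩
      obtain ⟨b0, hb0mem, hb0min⟩ :=
        Set.exists_min_image (UPset M) (fun b => TW (stdW n b)) (upset_finite M) hne
      have hKvanish : Subsingleton ((kerMod (epsQ M)).obj.obj (stdW n b0)) := by
        have hmin : ∀ a : ix M, Nonempty (xw M a ⟶ stdW n b0) → a.1 = b0 := by
          intro a hne2
          have h3 : TW (stdW n b0) ≤ TW (stdW n a.1) :=
            hb0min a.1 (supp_subset_upset M a.2)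
          exact Rle.eq_of_tw hne2 h3
        have hinj := epsQ_injective_at_min M b0 hmin
        constructor
        intro u v
        apply Subtype.ext
        have hu : (epsQ M).app (stdW n b0) u.1 = 0 := u.2
        have hv : (epsQ M).app (stdW n b0) v.1 = 0 := v.2
        exact hinj (hu.trans hv.symm)
      have hb0notK : b0 ∉ UPset (kerMod (epsQ M)) := by
        rintro ⟨b, hbK, hRb⟩
        have hbUP : b ∈ UPset M := hsuppK hbK
        have h1 : TW (stdW n b0) ≤ TW (stdW n b) := hb0min b hbUP
        have hbb0 : b = b0 := Rle.eq_of_tw hRb h1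
        rw [hbb0] at hbK
        exact hbK hKvanish
      have hKsubset : UPset (kerMod (epsQ M)) ⊆ UPset M := by
        rintro c ⟨b, hbK, hRbc⟩
        obtain ⟨a, haS, hRab⟩ := hsuppK hbK
        exact ⟨a, haS, hRab.trans hRbc⟩
      have hKlt : (UPset (kerMod (epsQ M))).ncard < (UPset M).ncard :=
        Set.ncard_lt_ncard ((Set.ssubset_iff_of_subset hKsubset).mpr
          ⟨b0, hb0mem, hb0notK⟩) (upset_finite M)
      have hKcard : (UPset (kerMod (epsQ M))).ncard ≤ N := by omega
      obtain ⟨l', P', π', d', hproj', hvan', hsur', hex0', hex'⟩ :=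
        ih (kerMod (epsQ M)) hKcard
      refine ⟨l' + 1,
        (fun j => match j with | 0 => Qmod M | (j+1) => P' j),
        epsQ M,
        (fun j => match j with | 0 => π' ≫ kerIncl (epsQ M) | (j+1) => d' j),
        ?_, ?_, ?_, ?_, ?_⟩
      · intro j
        match j with
        | 0 => exact qmod_projective M
        | (j+1) => exact hproj' j
      · intro j hj S
        match j with
        | 0 => omega
        | (j+1) => exact hvan' j (by omega) S
      · exact epsQ_surjective M
      · intro S
        apply Set.eq_of_subset_of_subset
        · rintro x ⟨y, rfl⟩
          show (epsQ M).app S ((π' ≫ kerIncl (epsQ M)).app S y) = 0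
          show (epsQ M).app S ((π'.app S y).1) = 0
          exact (π'.app S y).2
        · intro x hx
          obtain ⟨y, hy⟩ := hsur' S ⟨x, hx⟩
          refine ⟨y, ?_⟩
          show ((π'.app S y).1 : _) = x
          rw [hy]
      · intro j S
        match j with
        | 0 =>
          rw [hex0' S]
          apply Set.eq_of_subset_of_subset
          · intro x hx
            show ((π' ≫ kerIncl (epsQ M)).app S) x = 0
            show ((π'.app S x).1 : _) = 0
            rw [show π'.app S x = 0 from hx]
            rfl
          · intro x hx
            have hx' : ((π'.app S x).1 : _) = 0 := hx
            exact ZeroMemClass.coe_eq_zero.mp hx'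
        | (j+1) => exact hex' j S

end ProjResolution

section JMachine

variable (N : WSet n ⥤ FGModuleCat ℂ) (x : WSet n)

/-- The submodule of equivariant functions on `Hom(S, x)`. -/
def JSub (S : WSet n) : Submodule ℂ ((S ⟶ x) → N.obj x) where
  carrier := {f | ∀ (b : x ⟶ x) (g : S ⟶ x), f (g ≫ b) = N.map b (f g)}
  add_mem' := fun {f1 f2} hf1 hf2 b g => by
    simp only [Pi.add_apply, map_add, hf1 b g, hf2 b g]
  zero_mem' := fun b g => by simp
  smul_mem' := fun c f hf b g => by
    simp only [Pi.smul_apply, map_smul, hf b g]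

lemma jsub_mapsTo {S T : WSet n} (φ : S ⟶ T) :
    ∀ f ∈ JSub N x S,
      (LinearMap.funLeft ℂ (N.obj x) (fun h : T ⟶ x => φ ≫ h)) f ∈ JSub N x T := by
  intro f hf b h
  show f (φ ≫ (h ≫ b)) = N.map b (f (φ ≫ h))
  rw [← Category.assoc]
  exact hf b (φ ≫ h)

/-- The injective cogenerator attached to `x` with coefficients from `N`. -/
@[reducible] noncomputable def Jfun : WSet n ⥤ FGModuleCat ℂ where
  obj S := FGModuleCat.of ℂ ↥(JSub N x S)
  map {S T} φ := ofLin ((LinearMap.funLeft ℂ (N.obj x) (fun h : T ⟶ x => φ ≫ h)).restrict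
      (p := JSub N x S) (q := JSub N x T) (fun f hf => jsub_mapsTo N x φ f hf))
  map_id S := by
    apply FGModuleCat.hom_ext; apply LinearMap.ext; intro f; apply Subtype.ext
    funext h
    show f.1 (𝟙 S ≫ h) = f.1 h
    rw [Category.id_comp]
  map_comp {S T U} φ ψ := by
    apply FGModuleCat.hom_ext; apply LinearMap.ext; intro f; apply Subtype.ext
    funext h
    show f.1 ((φ ≫ ψ) ≫ h) = f.1 (φ ≫ (ψ ≫ h))
    rw [Category.assoc]

@[simp] lemma jfun_map_coe {S T : WSet n} (φ : S ⟶ T) (f : ↥(JSub N x S)) (h : T ⟶ x) :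
    (((Jfun N x).map φ) f).1 h = f.1 (φ ≫ h) := rfl

variable (N' : WSet n ⥤ FGModuleCat ℂ)

/-- The morphism into `J(x,N)` attached to an equivariant linear map. -/
noncomputable def JfromApp (lam : N'.obj x →ₗ[ℂ] N.obj x)
    (hlam : ∀ (b : x ⟶ x) (v : N'.obj x), lam (N'.map b v) = N.map b (lam v)) (S : WSet n) :
    N'.obj S →ₗ[ℂ] ↥(JSub N x S) :=
  { toFun := fun m => ⟨fun g => lam (N'.map g m), by
      intro b g
      have h1 : N'.map (g ≫ b) m = N'.map b (N'.map g m) := by rw [N'.map_comp]; rfl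
      show lam (N'.map (g ≫ b) m) = N.map b (lam (N'.map g m))
      rw [h1, hlam]⟩
    map_add' := fun u v => by
      apply Subtype.ext; funext g
      show lam (N'.map g (u + v)) = lam (N'.map g u) + lam (N'.map g v)
      rw [map_add, map_add]
    map_smul' := fun c v => by
      apply Subtype.ext; funext g
      show lam (N'.map g (c • v)) = c • lam (N'.map g v)
      rw [map_smul, map_smul] }

@[simp] lemma jfromApp_coe (lam) (hlam) (S : WSet n) (m : N'.obj S) (g : S ⟶ x) :
    ((JfromApp N x N' lam hlam S) m).1 g = lam (N'.map g m) := rfl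

/-- The natural transformation into `J(x,N)`. -/
noncomputable def Jfrom (lam : N'.obj x →ₗ[ℂ] N.obj x)
    (hlam : ∀ (b : x ⟶ x) (v : N'.obj x), lam (N'.map b v) = N.map b (lam v)) :
    N' ⟶ Jfun N x :=
  { app := fun S => ofLin (JfromApp N x N' lam hlam S)
    naturality := fun S T φ => by
      apply FGModuleCat.hom_ext; apply LinearMap.ext
      intro m
      apply Subtype.ext
      funext h
      show lam (N'.map h (N'.map φ m)) = lam (N'.map (φ ≫ h) m)
      rw [N'.map_comp]
      rfl }

/-- Evaluation at the identity. -/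
noncomputable def toLamJ (η : N' ⟶ Jfun N x) : N'.obj x →ₗ[ℂ] N.obj x :=
  { toFun := fun u => (η.app x u).1 (𝟙 x)
    map_add' := fun u v => by
      show (η.app x (u + v)).1 (𝟙 x) = (η.app x u).1 (𝟙 x) + (η.app x v).1 (𝟙 x)
      rw [map_add]
      rfl
    map_smul' := fun c v => by
      show (η.app x (c • v)).1 (𝟙 x) = c • (η.app x v).1 (𝟙 x)
      rw [map_smul]
      rfl }

lemma toLamJ_equiv (η : N' ⟶ Jfun N x) (b : x ⟶ x) (u : N'.obj x) :
    toLamJ N x N' η (N'.map b u) = N.map b (toLamJ N x N' η u) := by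
  show (η.app x (N'.map b u)).1 (𝟙 x) = N.map b ((η.app x u).1 (𝟙 x))
  have h1 : η.app x (N'.map b u) = (Jfun N x).map b (η.app x u) := by
    rw [← fg_comp_apply, η.naturality b]
    rfl
  rw [h1]
  have h2 : (((Jfun N x).map b) (η.app x u)).1 (𝟙 x) = (η.app x u).1 (b ≫ 𝟙 x) := rfl
  rw [h2, Category.comp_id, ← Category.id_comp b]
  exact (η.app x u).2 b (𝟙 x)

lemma jfrom_toLamJ (η : N' ⟶ Jfun N x) (S : WSet n) (u : N'.obj S) :
    JfromApp N x N' (toLamJ N x N' η) (toLamJ_equiv N x N' η) S u = η.app S u := by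
  apply Subtype.ext
  funext g
  show (η.app x (N'.map g u)).1 (𝟙 x) = (η.app S u).1 g
  have h1 : η.app x (N'.map g u) = (Jfun N x).map g (η.app S u) := by
    rw [← fg_comp_apply, η.naturality g]
    rfl
  rw [h1]
  show (η.app S u).1 (g ≫ 𝟙 x) = (η.app S u).1 g
  rw [Category.comp_id]

lemma jfrom_id_injective (S : WSet n) (u : S ⟶ x) (htw : TW x ≤ TW S) :
    Function.Injective
      (JfromApp N x N LinearMap.id (fun b v => rfl) S) := by
  have hker : ∀ m, JfromApp N x N LinearMap.id (fun b v => rfl) S m = 0 → m = 0 := by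
    intro m hm
    have h1 : N.map u m = 0 := by
      have := congrArg (fun F : ↥(JSub N x S) => F.1 u) hm
      exact this
    exact nmap_injective N u htw (by rw [h1, map_zero])
  intro m1 m2 h
  have := hker (m1 - m2) (by rw [map_sub, h, sub_self])
  exact sub_eq_zero.mp this

lemma jfrom_id_surjective (S : WSet n) (u : S ⟶ x) (htw : TW x ≤ TW S) :
    Function.Surjective
      (JfromApp N x N LinearMap.id (fun b v => rfl) S) := by
  intro f
  refine ⟨N.map (minv u htw) (f.1 u), ?_⟩
  apply Subtype.ext
  funext g
  show N.map g (N.map (minv u htw) (f.1 u)) = f.1 g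
  rw [← fg_comp_apply, ← N.map_comp]
  have h1 : u ≫ (minv u htw ≫ g) = g := by
    rw [← Category.assoc, comp_minv, Category.id_comp]
  have h2 := f.2 (minv u htw ≫ g) u
  rw [h1] at h2
  exact h2.symm

/-- Averaged extension of equivariant maps through a pointwise injection. -/
lemma avg_extend (X Y : WSet n ⥤ FGModuleCat ℂ) (i : X ⟶ Y)
    (hinj : Function.Injective (i.app x)) (lam : X.obj x →ₗ[ℂ] N.obj x)
    (hl : ∀ (b : x ⟶ x) (v : X.obj x), lam (X.map b v) = N.map b (lam v)) :
    ∃ lam' : Y.obj x →ₗ[ℂ] N.obj x,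
      (∀ (b : x ⟶ x) (v : Y.obj x), lam' (Y.map b v) = N.map b (lam' v)) ∧
      ∀ u, lam' (i.app x u) = lam u := by
  letI := Fintype.ofFinite (x ⟶ x)
  obtain ⟨r, hr⟩ := (toLin (i.app x)).exists_leftInverse_of_injective
    (LinearMap.ker_eq_bot.mpr hinj)
  have hr' : ∀ u, r (i.app x u) = u := fun u => LinearMap.congr_fun hr u
  have hcard : (cEnd x : ℂ) ≠ 0 := cEnd_ne_zero x
  have hcardf : (cEnd x : ℕ) = Fintype.card (x ⟶ x) := by
    rw [cEnd, Nat.card_eq_fintype_card]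
  refine ⟨(cEnd x : ℂ)⁻¹ • ∑ b : x ⟶ x,
    (toLin (N.map b)).comp ((lam.comp r).comp (toLin (Y.map (einv b)))), ?_, ?_⟩
  · intro b0 v
    rw [LinearMap.smul_apply, LinearMap.smul_apply, map_smul]
    congr 1
    rw [LinearMap.sum_apply, LinearMap.sum_apply, map_sum]
    rw [← Equiv.sum_comp (compEquiv b0) (fun b : x ⟶ x =>
      ((toLin (N.map b)).comp ((lam.comp r).comp (toLin (Y.map (einv b))))) (Y.map b0 v))]
    apply Finset.sum_congr rfl
    intro c _
    show N.map (c ≫ b0) (lam (r (Y.map (einv (c ≫ b0)) (Y.map b0 v))))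
      = N.map b0 (N.map c (lam (r (Y.map (einv c) v))))
    rw [einv_comp_eq]
    have h1 : Y.map (einv b0 ≫ einv c) (Y.map b0 v) = Y.map (einv c) v := by
      rw [← fg_comp_apply, ← Y.map_comp, ← Category.assoc, comp_einv, Category.id_comp]
    rw [h1, N.map_comp]
    rfl
  · intro u
    rw [LinearMap.smul_apply, LinearMap.sum_apply]
    have hterm : ∀ b : x ⟶ x,
        ((toLin (N.map b)).comp ((lam.comp r).comp (toLin (Y.map (einv b))))) (i.app x u)
          = lam u := by
      intro b
      show N.map b (lam (r (Y.map (einv b) (i.app x u)))) = lam u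
      have h1 : Y.map (einv b) (i.app x u) = i.app x (X.map (einv b) u) := by
        rw [← fg_comp_apply, ← i.naturality (einv b), fg_comp_apply]
      rw [h1, hr', hl, ← fg_comp_apply, ← N.map_comp, einv_comp, N.map_id, fg_id_apply]
    rw [Finset.sum_congr rfl (fun b _ => hterm b), Finset.sum_const, Finset.card_univ,
      ← hcardf, ← Nat.cast_smul_eq_nsmul ℂ, smul_smul, inv_mul_cancel₀ hcard, one_smul]

end JMachine

section JConstruction

variable (M : ModU n)

lemma jsub_subsingleton (N : WSet n ⥤ FGModuleCat ℂ) (x S : WSet n)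
    (h : ¬ Nonempty (S ⟶ x)) : Subsingleton ↥(JSub N x S) := by
  constructor
  intro f g
  apply Subtype.ext
  funext g'
  exact absurd ⟨g'⟩ h

/-- The enveloping injective object: product of the `J`'s over the support. -/
@[reducible] noncomputable def Jpfun : WSet n ⥤ FGModuleCat ℂ where
  obj S := FGModuleCat.of ℂ (∀ a : ix M, ↥(JSub M.obj (xw M a) S))
  map {S T} φ := ofLin (LinearMap.pi
    (fun a => (toLin ((Jfun M.obj (xw M a)).map φ)).comp (LinearMap.proj a)))
  map_id S := by
    apply FGModuleCat.hom_ext; apply LinearMap.ext; intro F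
    funext a
    show toLin ((Jfun M.obj (xw M a)).map (𝟙 S)) (F a) = F a
    rw [(Jfun M.obj (xw M a)).map_id]
    rfl
  map_comp {S T U} φ ψ := by
    apply FGModuleCat.hom_ext; apply LinearMap.ext; intro F
    funext a
    show toLin ((Jfun M.obj (xw M a)).map (φ ≫ ψ)) (F a)
      = toLin ((Jfun M.obj (xw M a)).map ψ) (toLin ((Jfun M.obj (xw M a)).map φ) (F a))
    rw [(Jfun M.obj (xw M a)).map_comp]
    rfl

/-- The down-closure of the support. -/
def DOWNset : Set (Fin n → ℕ) := {b | ∃ a ∈ SuppSet M, Rle n b a}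

lemma downset_finite : (DOWNset M).Finite := by
  apply Set.Finite.subset ((suppSet_finite M).biUnion
    (fun a _ => finite_rle_to (n := n) a))
  rintro b ⟨a, ha, hr⟩
  exact Set.mem_biUnion ha hr

lemma supp_subset_downset : SuppSet M ⊆ DOWNset M := fun a ha => ⟨a, ha, Rle.refl a⟩

lemma jpfun_subsingleton (S : WSet n)
    (h : ∀ a : ix M, ¬ Nonempty (S ⟶ xw M a)) :
    Subsingleton (∀ a : ix M, ↥(JSub M.obj (xw M a) S)) := by
  constructor
  intro F G
  funext a
  haveI := jsub_subsingleton M.obj (xw M a) S (h a)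
  exact Subsingleton.elim _ _

lemma jpfun_finsupp : FinSupp n (Jpfun M) := by
  apply Set.Finite.subset (downset_finite M)
  intro b hb
  simp only [Set.mem_setOf_eq] at hb
  by_contra hnb
  apply hb
  apply jpfun_subsingleton
  intro a ⟨g⟩
  exact hnb ⟨a.1, a.2, ⟨g⟩⟩

/-- `J` as an object of `ModU n`. -/
@[reducible] noncomputable def Jmod : ModU n := ⟨Jpfun M, jpfun_finsupp M⟩

/-- The coaugmentation `M ⟶ J`. -/
noncomputable def muQ : M ⟶ Jmod M :=
  ObjectProperty.homMk
  { app := fun S => ofLin (LinearMap.pi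
      (fun a => JfromApp M.obj (xw M a) M.obj LinearMap.id (fun _ _ => rfl) S))
    naturality := fun S T φ => by
      apply FGModuleCat.hom_ext; apply LinearMap.ext
      intro m
      funext a
      apply Subtype.ext
      funext h
      show M.obj.map h (M.obj.map φ m) = M.obj.map (φ ≫ h) m
      rw [M.obj.map_comp]
      rfl }

@[simp] lemma muQ_app_coe (S : WSet n) (m : M.obj.obj S) (a : ix M) (g : S ⟶ xw M a) :
    (((muQ M).app S m) a).1 g = M.obj.map g m := rfl

lemma muQ_injective (S : WSet n) : Function.Injective ((muQ M).app S) := by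
  by_cases hs : Subsingleton (M.obj.obj S)
  · intro u v _
    exact @Subsingleton.elim _ hs u v
  · have ha : cnt S ∈ SuppSet M := mem_supp_of_not_subsingleton M S hs
    set a0 : ix M := (⟨cnt S, ha⟩ : ↥(SuppSet M)) with ha0
    have hker : ∀ m, (muQ M).app S m = 0 → m = 0 := by
      intro m hm
      have hcomp : JfromApp M.obj (xw M a0) M.obj LinearMap.id (fun _ _ => rfl) S m = 0 :=
        congrFun hm a0
      exact jfrom_id_injective M.obj (stdW n (cnt S)) S (stdInv S)
        (le_of_eq (tw_stdHom S)) (by rw [map_zero]; exact hcomp)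
    intro m1 m2 h
    have := hker (m1 - m2) (by rw [map_sub, h, sub_self])
    exact sub_eq_zero.mp this

lemma muQ_surjective_at_max (b0 : Fin n → ℕ)
    (hmax : ∀ a : ix M, Nonempty (stdW n b0 ⟶ xw M a) → a.1 = b0) :
    Function.Surjective ((muQ M).app (stdW n b0)) := by
  classical
  intro F
  by_cases hex : ∃ a0 : ix M, a0.1 = b0
  · obtain ⟨a0, ha0⟩ := hex
    have heq : stdW n b0 = xw M a0 := by rw [xw, ha0]
    have htw : TW (xw M a0) ≤ TW (stdW n b0) := le_of_eq (by rw [heq])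
    obtain ⟨m, hm⟩ := jfrom_id_surjective M.obj (xw M a0) (stdW n b0)
      (eqToHom heq) htw (F a0)
    refine ⟨m, funext fun a => ?_⟩
    by_cases hab : a = a0
    · subst hab
      exact hm
    · haveI : Subsingleton ↥(JSub M.obj (xw M a) (stdW n b0)) := by
        apply jsub_subsingleton
        intro hne
        exact hab (Subtype.ext ((hmax a hne).trans ha0.symm))
      exact Subsingleton.elim _ _
  · refine ⟨0, funext fun a => ?_⟩
    haveI : Subsingleton ↥(JSub M.obj (xw M a) (stdW n b0)) := by
      apply jsub_subsingleton
      intro hne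
      exact hex ⟨a, hmax a hne⟩
    exact Subsingleton.elim _ _

/-- A family of equivariant maps gives a morphism into `J`. -/
noncomputable def JprodFrom (Y : ModU n)
    (lam : ∀ a : ix M, Y.obj.obj (xw M a) →ₗ[ℂ] M.obj.obj (xw M a))
    (hlam : ∀ a, ∀ (b : xw M a ⟶ xw M a) (v : Y.obj.obj (xw M a)),
      lam a (Y.obj.map b v) = M.obj.map b (lam a v)) :
    Y ⟶ Jmod M :=
  ObjectProperty.homMk
  { app := fun S => ofLin (LinearMap.pi
      (fun a => JfromApp M.obj (xw M a) Y.obj (lam a) (hlam a) S))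
    naturality := fun S T φ => by
      apply FGModuleCat.hom_ext; apply LinearMap.ext
      intro m
      funext a
      apply Subtype.ext
      funext h
      show lam a (Y.obj.map h (Y.obj.map φ m)) = lam a (Y.obj.map (φ ≫ h) m)
      rw [Y.obj.map_comp]
      rfl }

/-- Component projection from `J`. -/
noncomputable def projJ (a : ix M) : Jpfun M ⟶ Jfun M.obj (xw M a) :=
  { app := fun S => ofLin (LinearMap.proj a)
    naturality := fun S T φ => rfl }

lemma jmod_injective : Injective (Jmod M) := by
  constructor
  intro X Y g f hf
  have hinj : ∀ S, Function.Injective (f.app S) := fun S => app_injective_of_mono f S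
  have hext : ∀ a : ix M, ∃ lam' : Y.obj.obj (xw M a) →ₗ[ℂ] M.obj.obj (xw M a),
      (∀ (b : xw M a ⟶ xw M a) (v), lam' (Y.obj.map b v) = M.obj.map b (lam' v)) ∧
      ∀ u, lam' (f.app (xw M a) u)
        = toLamJ M.obj (xw M a) X.obj (g.hom ≫ projJ M a) u := by
    intro a
    exact avg_extend M.obj (xw M a) X.obj Y.obj f.hom (hinj (xw M a))
      (toLamJ M.obj (xw M a) X.obj (g.hom ≫ projJ M a))
      (fun b v => toLamJ_equiv M.obj (xw M a) X.obj (g.hom ≫ projJ M a) b v)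
  choose lam' hlam1 hlam2 using hext
  refine ⟨JprodFrom M Y lam' hlam1, ?_⟩
  apply ObjectProperty.hom_ext; apply NatTrans.ext
  funext S
  apply FGModuleCat.hom_ext; apply LinearMap.ext
  intro u
  funext a
  show JfromApp M.obj (xw M a) Y.obj (lam' a) (hlam1 a) S (f.app S u)
    = (g.app S u) a
  apply Subtype.ext
  funext gg
  show lam' a (Y.obj.map gg (f.app S u)) = ((g.app S u) a).1 gg
  have h1 : Y.obj.map gg (f.app S u) = f.app (xw M a) (X.obj.map gg u) := by
    rw [← fg_comp_apply, ← f.naturality gg, fg_comp_apply]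
  rw [h1, hlam2 a]
  have h2 := jfrom_toLamJ M.obj (xw M a) X.obj (g.hom ≫ projJ M a) S u
  have h3 := congrArg (fun F : ↥(JSub M.obj (xw M a) S) => F.1 gg) h2
  exact h3

end JConstruction

section InjResolution

/-- Existence of a finite injective resolution. -/
def HasInjRes (M : ModU n) : Prop :=
  ∃ (k : ℕ) (I : ℕ → ModU n) (ι : M ⟶ I 0) (d : ∀ j : ℕ, I j ⟶ I (j + 1)),
    (∀ j, Injective (I j)) ∧
    (∀ j, k < j → ∀ S : WSet n, Subsingleton ((I j).obj.obj S)) ∧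
    (∀ S : WSet n, Function.Injective (ι.app S)) ∧
    (∀ S : WSet n, Set.range (ι.app S) = {x | (d 0).app S x = 0}) ∧
    (∀ j, ∀ S : WSet n, Set.range ((d j).app S) = {x | (d (j + 1)).app S x = 0})

lemma hasInjRes_of_subsingleton (M : ModU n) (h : ∀ S, Subsingleton (M.obj.obj S)) :
    HasInjRes M := by
  refine ⟨0, fun _ => Zmod, zeroHom _ _, fun j => zeroHom _ _, ?_, ?_, ?_, ?_, ?_⟩
  · intro j; exact injective_of_subsingleton Zmod (fun S => zmod_subsingleton S)
  · intro j hj S; exact zmod_subsingleton S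
  · intro S u v _
    exact @Subsingleton.elim _ (h S) u v
  · intro S
    apply Set.eq_of_subset_of_subset
    · rintro x ⟨y, rfl⟩
      exact Subsingleton.elim _ _
    · intro x hx
      exact ⟨0, Subsingleton.elim _ _⟩
  · intro j S
    apply Set.eq_of_subset_of_subset
    · rintro x ⟨y, rfl⟩
      exact Subsingleton.elim _ _
    · intro x hx
      exact ⟨x, Subsingleton.elim _ _⟩

lemma supp_cokerMod_subset {A B : ModU n} (f : A ⟶ B) :
    SuppSet (cokerMod f) ⊆ SuppSet B := by
  intro a ha
  by_contra hB
  apply ha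
  have hsub : Subsingleton (B.obj.obj (stdW n a)) := not_not.mp hB
  constructor
  intro u v
  obtain ⟨u', rfl⟩ := Submodule.Quotient.mk_surjective _ u
  obtain ⟨v', rfl⟩ := Submodule.Quotient.mk_surjective _ v
  rw [@Subsingleton.elim _ hsub u' v']

lemma coker_subsingleton_of_surjective {A B : ModU n} (f : A ⟶ B) (S : WSet n)
    (h : Function.Surjective (f.app S)) : Subsingleton ((cokerMod f).obj.obj S) := by
  constructor
  intro u v
  obtain ⟨u', rfl⟩ := Submodule.Quotient.mk_surjective _ u
  obtain ⟨v', rfl⟩ := Submodule.Quotient.mk_surjective _ v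
  obtain ⟨mu, hmu⟩ := h u'
  obtain ⟨mv, hmv⟩ := h v'
  have hu : (Submodule.Quotient.mk u' :
      (cokerMod f).obj.obj S) = 0 := by
    rw [Submodule.Quotient.mk_eq_zero]
    exact ⟨mu, hmu⟩
  have hv : (Submodule.Quotient.mk v' :
      (cokerMod f).obj.obj S) = 0 := by
    rw [Submodule.Quotient.mk_eq_zero]
    exact ⟨mv, hmv⟩
  rw [hu, hv]

lemma hasInjRes_of_card : ∀ (N : ℕ) (M : ModU n), (DOWNset M).ncard ≤ N → HasInjRes M := by
  intro N
  induction N with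
  | zero =>
    intro M h
    apply hasInjRes_of_subsingleton
    apply subsingleton_of_supp_empty
    have hempty : DOWNset M = ∅ := ((Set.ncard_eq_zero (downset_finite M)).mp (Nat.le_zero.mp h))
    apply Set.eq_empty_iff_forall_notMem.mpr
    intro a ha
    have : a ∈ DOWNset M := supp_subset_downset M ha
    rw [hempty] at this
    exact this
  | succ N ih =>
    intro M hcard
    by_cases hsupp : SuppSet M = ∅
    · exact hasInjRes_of_subsingleton M (subsingleton_of_supp_empty M hsupp)
    · have hsuppJ : SuppSet (Jmod M) ⊆ DOWNset M := by
        intro b hb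
        by_contra hbD
        apply hb
        have hq : Subsingleton (∀ a : ix M, ↥(JSub M.obj (xw M a) (stdW n b))) := by
          apply jpfun_subsingleton
          intro a ⟨g⟩
          exact hbD ⟨a.1, a.2, ⟨g⟩⟩
        exact hq
      have hsuppC : SuppSet (cokerMod (muQ M)) ⊆ DOWNset M :=
        fun b hb => hsuppJ (supp_cokerMod_subset (muQ M) hb)
      have hne : (DOWNset M).Nonempty := by
        obtain ⟨a, ha⟩ := Set.nonempty_iff_ne_empty.mpr hsupp
        exact ⟨a, supp_subset_downset M ha⟩
      obtain ⟨b0, hb0mem, hb0max⟩ :=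
        Set.exists_max_image (DOWNset M) (fun b => TW (stdW n b)) (downset_finite M) hne
      have hCvanish : Subsingleton ((cokerMod (muQ M)).obj.obj (stdW n b0)) := by
        apply coker_subsingleton_of_surjective
        apply muQ_surjective_at_max
        intro a hne2
        have haD : a.1 ∈ DOWNset M := supp_subset_downset M a.2
        have h3 : TW (stdW n a.1) ≤ TW (stdW n b0) := hb0max a.1 haD
        exact (Rle.eq_of_tw hne2 h3).symm
      have hb0notC : b0 ∉ DOWNset (cokerMod (muQ M)) := by
        rintro ⟨b, hbC, hRb⟩
        have hbD : b ∈ DOWNset M := hsuppC hbC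
        have h1 : TW (stdW n b) ≤ TW (stdW n b0) := hb0max b hbD
        have hbb0 : b0 = b := Rle.eq_of_tw hRb h1
        rw [← hbb0] at hbC
        exact hbC hCvanish
      have hCsubset : DOWNset (cokerMod (muQ M)) ⊆ DOWNset M := by
        rintro c ⟨b, hbC, hRcb⟩
        obtain ⟨a, haS, hRba⟩ := hsuppC hbC
        exact ⟨a, haS, hRcb.trans hRba⟩
      have hClt : (DOWNset (cokerMod (muQ M))).ncard < (DOWNset M).ncard :=
        Set.ncard_lt_ncard ((Set.ssubset_iff_of_subset hCsubset).mpr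
          ⟨b0, hb0mem, hb0notC⟩) (downset_finite M)
      have hCcard : (DOWNset (cokerMod (muQ M))).ncard ≤ N := by omega
      obtain ⟨k', I', ι', d', hinj', hvan', hmono', hex0', hex'⟩ :=
        ih (cokerMod (muQ M)) hCcard
      refine ⟨k' + 1,
        (fun j => match j with | 0 => Jmod M | (j+1) => I' j),
        muQ M,
        (fun j => match j with | 0 => cokerProj (muQ M) ≫ ι' | (j+1) => d' j),
        ?_, ?_, ?_, ?_, ?_⟩
      · intro j
        match j with
        | 0 => exact jmod_injective M
        | (j+1) => exact hinj' j
      · intro j hj S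
        match j with
        | 0 => omega
        | (j+1) => exact hvan' j (by omega) S
      · exact muQ_injective M
      · intro S
        apply Set.eq_of_subset_of_subset
        · rintro x ⟨m, rfl⟩
          show ι'.app S ((cokerProj (muQ M)).app S ((muQ M).app S m)) = 0
          have h1 : (cokerProj (muQ M)).app S ((muQ M).app S m) = 0 := by
            show Submodule.Quotient.mk ((muQ M).app S m) = 0
            rw [Submodule.Quotient.mk_eq_zero]
            exact ⟨m, rfl⟩
          rw [h1, map_zero]
        · intro x hx
          have hx' : ι'.app S ((cokerProj (muQ M)).app S x) = 0 := hx
          have h2 : (cokerProj (muQ M)).app S x = 0 :=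
            hmono' S (by rw [hx', map_zero])
          have h3 : x ∈ LinearMap.range (toLin ((muQ M).app S)) := by
            rw [← Submodule.Quotient.mk_eq_zero]
            exact h2
          obtain ⟨m, hm⟩ := h3
          exact ⟨m, hm⟩
      · intro j S
        match j with
        | 0 =>
          apply Set.eq_of_subset_of_subset
          · rintro x ⟨y, rfl⟩
            have h1 : (cokerProj (muQ M) ≫ ι').app S y
                = ι'.app S ((cokerProj (muQ M)).app S y) := rfl
            rw [h1]
            have h2 := hex0' S
            have h3 : ι'.app S ((cokerProj (muQ M)).app S y)
                ∈ Set.range (ι'.app S) := ⟨_, rfl⟩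
            rw [h2] at h3
            exact h3
          · intro x hx
            have h2 := hex0' S
            have h3 : x ∈ Set.range (ι'.app S) := by rw [h2]; exact hx
            obtain ⟨q, hq⟩ := h3
            obtain ⟨y, rfl⟩ := Submodule.Quotient.mk_surjective _ q
            exact ⟨y, hq⟩
        | (j+1) => exact hex' j S

end InjResolution

end Stmt6Aux

/-- Every `𝒰`-module has a finite injective resolution and a finite projective
resolution (exactness is checked pointwise, as `Mod_𝒰` sits inside a functor category
into vector spaces).  The resolutions are encoded as `ℕ`-indexed complexes which vanish
beyond a finite stage. -/
theorem stmt6 (n : ℕ) (hn : 1 ≤ n) (M : ModU n) :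
    (∃ (k : ℕ) (I : ℕ → ModU n) (ι : M ⟶ I 0) (d : ∀ j : ℕ, I j ⟶ I (j + 1)),
      (∀ j, Injective (I j)) ∧
      (∀ j, k < j → ∀ S : WSet n, Subsingleton ((I j).obj.obj S)) ∧
      (∀ S : WSet n, Function.Injective (ι.hom.app S)) ∧
      (∀ S : WSet n, Set.range (ι.hom.app S) = {x | (d 0).hom.app S x = 0}) ∧
      (∀ j, ∀ S : WSet n, Set.range ((d j).hom.app S) = {x | (d (j + 1)).hom.app S x = 0})) ∧
    (∃ (l : ℕ) (P : ℕ → ModU n) (π : P 0 ⟶ M) (d : ∀ j : ℕ, P (j + 1) ⟶ P j),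
      (∀ j, Projective (P j)) ∧
      (∀ j, l < j → ∀ S : WSet n, Subsingleton ((P j).obj.obj S)) ∧
      (∀ S : WSet n, Function.Surjective (π.hom.app S)) ∧
      (∀ S : WSet n, Set.range ((d 0).hom.app S) = {x | π.hom.app S x = 0}) ∧
      (∀ j, ∀ S : WSet n, Set.range ((d (j + 1)).hom.app S) = {x | (d j).hom.app S x = 0})) := by
  constructor
  · exact Stmt6Aux.hasInjRes_of_card (Stmt6Aux.DOWNset M).ncard M le_rfl
  · exact Stmt6Aux.hasProjRes_of_card (Stmt6Aux.UPset M).ncard M le_rfl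
end

section
/- For 1 ≤ i < j ≤ n, every G-equivariant linear map V/V_{j−1} → V/V_{i−1} is zero. -/
set_option linter.unusedVariables false
set_option maxHeartbeats 1000000

open scoped TensorProduct

/-- The infinite-dimensional vector space `V` with basis `e_{i,k}`, `i : Fin n`, `k : ℕ`. -/
abbrev V (n : ℕ) : Type := (Fin n × ℕ) →₀ ℂ

/-- The basis vector `e_{i,k}`. -/
noncomputable def ee {n : ℕ} (x : Fin n × ℕ) : V n := Finsupp.single x 1

/-- The subspace `V_i`: the span of the basis vectors of the lowest `i` weights. -/
noncomputable def Vle (n i : ℕ) : Submodule ℂ (V n) :=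
  Submodule.span ℂ {v | ∃ x : Fin n × ℕ, (x.1 : ℕ) < i ∧ v = ee x}

/-- The defining property of the group `G`: a flag-preserving automorphism of `V`
moving only finitely many basis vectors. -/
def GP {n : ℕ} (g : V n ≃ₗ[ℂ] V n) : Prop :=
  (∀ i : ℕ, Submodule.map (g : V n →ₗ[ℂ] V n) (Vle n i) ≤ Vle n i) ∧
  ∃ F : Finset (Fin n × ℕ), (∀ x ∉ F, g (ee x) = ee x) ∧
    ∀ x ∈ F, g (ee x) ∈ Submodule.span ℂ {v | ∃ y ∈ F, v = ee y}

lemma spanF_eq (n : ℕ) (F : Finset (Fin n × ℕ)) :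
    Submodule.span ℂ {v : V n | ∃ y ∈ F, v = ee y} =
      Finsupp.supported ℂ ℂ (F : Set (Fin n × ℕ)) := by
  rw [Finsupp.supported_eq_span_single]
  congr 1
  ext v
  constructor
  · rintro ⟨y, hy, rfl⟩
    exact ⟨y, hy, rfl⟩
  · rintro ⟨y, hy, rfl⟩
    exact ⟨y, hy, rfl⟩

lemma mem_spanF {n : ℕ} {F : Finset (Fin n × ℕ)} {v : V n} :
    v ∈ Submodule.span ℂ {v : V n | ∃ y ∈ F, v = ee y} ↔ ∀ x ∉ F, v x = 0 := by
  rw [spanF_eq, Finsupp.mem_supported']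
  exact ⟨fun h x hx => h x (by simpa using hx), fun h x hx => h x (by simpa using hx)⟩

lemma Vle_eq (n i : ℕ) :
    Vle n i = Finsupp.supported ℂ ℂ {x : Fin n × ℕ | (x.1 : ℕ) < i} := by
  rw [Finsupp.supported_eq_span_single, Vle]
  congr 1
  ext v
  constructor
  · rintro ⟨y, hy, rfl⟩
    exact ⟨y, hy, rfl⟩
  · rintro ⟨y, hy, rfl⟩
    exact ⟨y, hy, rfl⟩

lemma mem_Vle {n i : ℕ} {v : V n} :
    v ∈ Vle n i ↔ ∀ x : Fin n × ℕ, i ≤ (x.1 : ℕ) → v x = 0 := by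
  rw [Vle_eq, Finsupp.mem_supported']
  constructor
  · intro h x hx
    exact h x (by simpa using hx)
  · intro h x hx
    simp only [Set.mem_setOf_eq, not_lt] at hx
    exact h x hx

lemma maps_spanF {n : ℕ} (g : V n ≃ₗ[ℂ] V n) (F' F : Finset (Fin n × ℕ)) (hFF : F' ⊆ F)
    (hfix : ∀ x ∉ F', g (ee x) = ee x)
    (hmov : ∀ x ∈ F', g (ee x) ∈ Submodule.span ℂ {v : V n | ∃ y ∈ F', v = ee y})
    {v : V n} (hv : v ∈ Submodule.span ℂ {v : V n | ∃ y ∈ F, v = ee y}) :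
    g v ∈ Submodule.span ℂ {v : V n | ∃ y ∈ F, v = ee y} := by
  induction hv using Submodule.span_induction with
  | mem w hw =>
      obtain ⟨y, hy, rfl⟩ := hw
      by_cases hy' : y ∈ F'
      · exact Submodule.span_mono
          (fun u hu => by
            obtain ⟨z, hz, rfl⟩ := hu
            exact ⟨z, hFF hz, rfl⟩) (hmov y hy')
      · rw [hfix y hy']
        exact Submodule.subset_span ⟨y, hy, rfl⟩
  | zero => rw [map_zero]; exact Submodule.zero_mem _
  | add u w _ _ hu hw => rw [map_add]; exact Submodule.add_mem _ hu hw
  | smul c u _ hu => rw [map_smul]; exact Submodule.smul_mem _ c hu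

lemma fixes_supported {n : ℕ} (g : V n ≃ₗ[ℂ] V n) (F : Finset (Fin n × ℕ))
    (hfix : ∀ x ∉ F, g (ee x) = ee x) :
    ∀ v ∈ Finsupp.supported ℂ ℂ ((F : Set (Fin n × ℕ))ᶜ), g v = v := by
  intro v hv
  rw [Finsupp.supported_eq_span_single] at hv
  induction hv using Submodule.span_induction with
  | mem w hw =>
      obtain ⟨y, hy, rfl⟩ := hw
      exact hfix y (by simpa using hy)
  | zero => rw [map_zero]
  | add u w _ _ hu hw => rw [map_add, hu, hw]
  | smul c u _ hu => rw [map_smul, hu]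

lemma fixes_off {n : ℕ} (g : V n ≃ₗ[ℂ] V n) (F : Finset (Fin n × ℕ))
    (hfix : ∀ x ∉ F, g (ee x) = ee x)
    {v : V n} (hv : ∀ x ∈ F, v x = 0) : g v = v := by
  refine fixes_supported g F hfix v ?_
  rw [Finsupp.mem_supported']
  intro x hx
  simp only [Set.mem_compl_iff, Finset.mem_coe, not_not] at hx
  exact hv x hx

lemma spanF_fd {n : ℕ} (F : Finset (Fin n × ℕ)) :
    FiniteDimensional ℂ (Submodule.span ℂ {v : V n | ∃ y ∈ F, v = ee y}) := by
  have h : {v : V n | ∃ y ∈ F, v = ee y} = (fun y => ee y) '' (F : Set (Fin n × ℕ)) := by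
    ext v
    constructor
    · rintro ⟨y, hy, rfl⟩; exact ⟨y, hy, rfl⟩
    · rintro ⟨y, hy, rfl⟩; exact ⟨y, hy, rfl⟩
  rw [h]
  exact FiniteDimensional.span_of_finite ℂ (F.finite_toSet.image _)

lemma symm_stable {n : ℕ} (A : V n ≃ₗ[ℂ] V n) (p : Submodule ℂ (V n))
    [FiniteDimensional ℂ p] (hstab : ∀ v ∈ p, A v ∈ p) :
    ∀ v ∈ p, A.symm v ∈ p := by
  intro v hv
  have hinj : Function.Injective (A.toLinearMap.restrict hstab) := by
    intro x y hxy
    apply Subtype.ext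
    apply A.injective
    exact congrArg Subtype.val hxy
  obtain ⟨w, hw⟩ := ((@LinearMap.injective_iff_surjective ℂ p _ _ _ _ (A.toLinearMap.restrict hstab)).mp hinj) ⟨v, hv⟩
  have h1 : A w.1 = v := congrArg Subtype.val hw
  have h2 : A.symm v = w.1 := by rw [← h1, LinearEquiv.symm_apply_apply]
  rw [h2]
  exact w.2

/-- The group `G` of flag-preserving automorphisms of `V` moving only finitely many
basis vectors. -/
noncomputable def G (n : ℕ) : Subgroup (V n ≃ₗ[ℂ] V n) where
  carrier := {g | GP g}
  one_mem' := by
    constructor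
    · intro i v hv
      simpa using hv
    · exact ⟨∅, fun x _ => rfl, fun x hx => absurd hx (Finset.notMem_empty x)⟩
  mul_mem' := by
    rintro A B ⟨hA1, FA, hA2, hA3⟩ ⟨hB1, FB, hB2, hB3⟩
    constructor
    · intro i v hv
      obtain ⟨w, hw, rfl⟩ := hv
      show A (B w) ∈ Vle n i
      exact hA1 i ⟨B w, hB1 i ⟨w, hw, rfl⟩, rfl⟩
    · refine ⟨FA ∪ FB, ?_, ?_⟩
      · intro x hx
        have hxa : x ∉ FA := fun h => hx (Finset.mem_union_left _ h)
        have hxb : x ∉ FB := fun h => hx (Finset.mem_union_right _ h)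
        show A (B (ee x)) = ee x
        rw [hB2 x hxb, hA2 x hxa]
      · intro x hx
        show A (B (ee x)) ∈ _
        have hBx : B (ee x) ∈ Submodule.span ℂ {v : V n | ∃ y ∈ FA ∪ FB, v = ee y} := by
          by_cases hxb : x ∈ FB
          · refine Submodule.span_mono (fun u hu => ?_) (hB3 x hxb)
            obtain ⟨z, hz, rfl⟩ := hu
            exact ⟨z, Finset.mem_union_right _ hz, rfl⟩
          · rw [hB2 x hxb]
            exact Submodule.subset_span ⟨x, hx, rfl⟩
        exact maps_spanF A FA (FA ∪ FB) Finset.subset_union_left hA2 hA3 hBx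
  inv_mem' := by
    rintro A ⟨hA1, F, hfix, hmov⟩
    have hspan : ∀ v ∈ Submodule.span ℂ {v : V n | ∃ y ∈ F, v = ee y},
        A v ∈ Submodule.span ℂ {v : V n | ∃ y ∈ F, v = ee y} :=
      fun v hv => maps_spanF A F F (le_refl F) hfix hmov hv
    haveI := spanF_fd F
    constructor
    · intro i v' hv'
      obtain ⟨v, hv, rfl⟩ := hv'
      show A.symm v ∈ Vle n i
      classical
      set w := A.symm v with hwdef
      set wF := Finsupp.filter (· ∈ F) w with hwF
      set wO := Finsupp.filter (fun x => ¬ x ∈ F) w with hwO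
      have hsplit : wF + wO = w := Finsupp.filter_pos_add_filter_neg w _
      have hwFmem : wF ∈ Submodule.span ℂ {v : V n | ∃ y ∈ F, v = ee y} := by
        rw [mem_spanF]
        intro x hx
        exact Finsupp.filter_apply_neg _ _ hx
      have hgO : A wO = wO := by
        refine fixes_off A F hfix ?_
        intro x hx
        exact Finsupp.filter_apply_neg _ _ (by simpa using hx)
      have hAw : A w = v := A.apply_symm_apply v
      have hv2 : A wF + wO = v := by
        rw [← hAw, ← hsplit, map_add, hgO]
      have hAwFspan : A wF ∈ Submodule.span ℂ {v : V n | ∃ y ∈ F, v = ee y} :=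
        hspan wF hwFmem
      have hwOVle : wO ∈ Vle n i := by
        rw [mem_Vle]
        intro x hx
        by_cases hxF : x ∈ F
        · exact Finsupp.filter_apply_neg _ _ (by simpa using hxF)
        · have h1 : (A wF) x = 0 := by
            rw [mem_spanF] at hAwFspan
            exact hAwFspan x hxF
          have h2 : (A wF) x + wO x = v x := by
            rw [← hv2]; rfl
          have h3 : v x = 0 := mem_Vle.mp hv x hx
          rw [h1, zero_add] at h2
          rw [h2, h3]
      have hAwFVle : A wF ∈ Vle n i := by
        have : A wF = v - wO := by rw [← hv2]; abel
        rw [this]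
        exact Submodule.sub_mem _ hv hwOVle
      -- `A wF` lies in the finite-dimensional `A`-stable subspace `Vle n i ⊓ spanF F`
      set U := Vle n i ⊓ Submodule.span ℂ {v : V n | ∃ y ∈ F, v = ee y} with hU
      haveI : FiniteDimensional ℂ U :=
        Submodule.finiteDimensional_of_le inf_le_right
      have hUstab : ∀ u ∈ U, A u ∈ U := by
        intro u hu
        exact ⟨hA1 i ⟨u, hu.1, rfl⟩, hspan u hu.2⟩
      have hwFU : wF ∈ U := by
        have := symm_stable A U hUstab (A wF) ⟨hAwFVle, hAwFspan⟩
        rwa [LinearEquiv.symm_apply_apply] at this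
      have : w ∈ Vle n i := by
        rw [← hsplit]
        exact Submodule.add_mem _ hwFU.1 hwOVle
      exact this
    · refine ⟨F, ?_, ?_⟩
      · intro x hx
        show A.symm (ee x) = ee x
        exact (LinearEquiv.symm_apply_eq A).mpr (hfix x hx).symm
      · intro x hx
        show A.symm (ee x) ∈ _
        exact symm_stable A _ hspan (ee x) (Submodule.subset_span ⟨x, hx, rfl⟩)

lemma mem_G {n : ℕ} (g : V n ≃ₗ[ℂ] V n) : g ∈ G n ↔ GP g := Iff.rfl

lemma Vle_mono (n : ℕ) {i j : ℕ} (h : i ≤ j) : Vle n i ≤ Vle n j :=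
  Submodule.span_mono (fun v hv => by
    obtain ⟨x, hx, rfl⟩ := hv
    exact ⟨x, lt_of_lt_of_le hx h, rfl⟩)

lemma G_maps {n : ℕ} (g : G n) (i : ℕ) :
    Vle n i ≤ (Vle n i).comap (g.1 : V n →ₗ[ℂ] V n) := by
  intro x hx
  exact g.2.1 i ⟨x, hx, rfl⟩

/-- The representation of `G` on the quotient `V / V_i`. -/
noncomputable def ρQ (n i : ℕ) : Representation ℂ (G n) (V n ⧸ Vle n i) where
  toFun g := Submodule.mapQ _ _ (g.1 : V n →ₗ[ℂ] V n) (G_maps g i)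
  map_one' := by
    refine LinearMap.ext fun x => ?_
    obtain ⟨y, rfl⟩ := Submodule.Quotient.mk_surjective _ x
    simp [Submodule.mapQ_apply]
  map_mul' g h := by
    refine LinearMap.ext fun x => ?_
    obtain ⟨y, rfl⟩ := Submodule.Quotient.mk_surjective _ x
    simp [Submodule.mapQ_apply]

/-- The index set of the tensor factors of `T_a`: the standard `[n]`-weighted set `[a]`. -/
abbrev WI {n : ℕ} (a : Fin n → ℕ) : Type := (i : Fin n) × Fin (a i)

/-- `T_a = ⨂_i (V/V_{i-1})^{⊗ a_i}`, with tensor factors indexed by `[a]`. -/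
abbrev T (n : ℕ) (a : Fin n → ℕ) : Type := ⨂[ℂ] (x : WI a), (V n ⧸ Vle n x.1)

/-- The representation of `G` on `T_a`. -/
noncomputable def ρT (n : ℕ) (a : Fin n → ℕ) : Representation ℂ (G n) (T n a) where
  toFun g := PiTensorProduct.map fun x => ρQ n x.1 g
  map_one' := by
    have h : (fun x : WI a => ρQ n x.1 1) = fun x : WI a => LinearMap.id := by
      funext x; exact map_one _
    show PiTensorProduct.map (fun x : WI a => ρQ n x.1 1) = 1
    rw [h, PiTensorProduct.map_id]
    rfl
  map_mul' g h := by
    have h2 : (fun x : WI a => ρQ n x.1 (g * h)) =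
        fun x : WI a => (ρQ n x.1 g) ∘ₗ (ρQ n x.1 h) := by
      funext x; exact map_mul _ g h
    show PiTensorProduct.map (fun x : WI a => ρQ n x.1 (g * h)) = _
    rw [h2, PiTensorProduct.map_comp]
    rfl

/-- The canonical projection `V/V_i → V/V_j` for `i ≤ j`. -/
noncomputable def qproj (n : ℕ) {i j : ℕ} (h : i ≤ j) :
    (V n ⧸ Vle n i) →ₗ[ℂ] (V n ⧸ Vle n j) :=
  Submodule.mapQ _ _ LinearMap.id (by
    intro v hv
    simpa using Vle_mono n h hv)

/-- Weight-nondecreasing bijections `[a] ≃ [b]`. -/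
def IsWND {n : ℕ} {a b : Fin n → ℕ} (φ : WI a ≃ WI b) : Prop := ∀ x : WI a, x.1 ≤ (φ x).1

lemma IsWND.symm_le {n : ℕ} {a b : Fin n → ℕ} {φ : WI a ≃ WI b} (hφ : IsWND φ)
    (y : WI b) : ((φ.symm y).1 : ℕ) ≤ (y.1 : ℕ) := by
  have h := hφ (φ.symm y)
  rw [Equiv.apply_symm_apply] at h
  exact h

/-- The map `φ_* : T_a → T_b` induced by a weight-nondecreasing bijection `φ : [a] → [b]`:
reindex the tensor factors along `φ` and apply the canonical projections
`V/V_{i-1} → V/V_{j-1}` factorwise. -/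
noncomputable def ind (n : ℕ) {a b : Fin n → ℕ} (φ : WI a ≃ WI b) (hφ : IsWND φ) :
    T n a →ₗ[ℂ] T n b :=
  (PiTensorProduct.map fun y : WI b => qproj n (hφ.symm_le y)) ∘ₗ
    (PiTensorProduct.reindex ℂ (fun x : WI a => V n ⧸ Vle n x.1) φ).toLinearMap

/-- A linear map `T_a → T_b` is `G`-equivariant if it commutes with the `G`-actions. -/
def IsGEquiv (n : ℕ) {a b : Fin n → ℕ} (f : T n a →ₗ[ℂ] T n b) : Prop :=
  ∀ g : G n, f ∘ₗ ρT n a g = ρT n b g ∘ₗ f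

/-- The space of `G`-equivariant linear maps `T_a → T_b`. -/
noncomputable def EquivMaps (n : ℕ) (a b : Fin n → ℕ) :
    Submodule ℂ (T n a →ₗ[ℂ] T n b) where
  carrier := {f | IsGEquiv n f}
  add_mem' hf hf' g := by
    rw [LinearMap.add_comp, LinearMap.comp_add, hf g, hf' g]
  zero_mem' g := by
    rw [LinearMap.zero_comp, LinearMap.comp_zero]
  smul_mem' c f hf g := by
    rw [LinearMap.smul_comp, LinearMap.comp_smul, hf g]

/-- The elementary linear map `v ↦ v + (c * v x) • u`. -/
noncomputable def elemLM {n : ℕ} (x : Fin n × ℕ) (u : V n) (c : ℂ) : V n →ₗ[ℂ] V n :=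
  LinearMap.id + c • ((Finsupp.lapply x : V n →ₗ[ℂ] ℂ).smulRight u)

lemma elemLM_apply {n : ℕ} (x : Fin n × ℕ) (u : V n) (c : ℂ) (v : V n) :
    elemLM x u c v = v + (c * v x) • u := by
  simp [elemLM, smul_smul]

lemma elemLM_comp {n : ℕ} (x : Fin n × ℕ) (u : V n) (c d : ℂ) :
    (elemLM x u c) ∘ₗ (elemLM x u d) = elemLM x u (c + d + c * d * u x) := by
  refine LinearMap.ext fun v => ?_
  simp only [LinearMap.comp_apply, elemLM_apply, Finsupp.add_apply, Finsupp.smul_apply,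
    smul_eq_mul]
  module

lemma elemLM_zero {n : ℕ} (x : Fin n × ℕ) (u : V n) :
    elemLM x u 0 = LinearMap.id := by
  refine LinearMap.ext fun v => ?_
  simp [elemLM_apply]

/-- The elementary automorphism `v ↦ v + (c * v x) • u`, invertible when
`1 + c * u x ≠ 0`. -/
noncomputable def elemLE {n : ℕ} (x : Fin n × ℕ) (u : V n) (c : ℂ)
    (h : 1 + c * u x ≠ 0) : V n ≃ₗ[ℂ] V n :=
  LinearEquiv.ofLinear (elemLM x u c) (elemLM x u (-c / (1 + c * u x)))
    (by
      rw [elemLM_comp]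
      have : c + -c / (1 + c * u x) + c * (-c / (1 + c * u x)) * u x = 0 := by
        field_simp
        ring
      rw [this, elemLM_zero])
    (by
      rw [elemLM_comp]
      have : -c / (1 + c * u x) + c + -c / (1 + c * u x) * c * u x = 0 := by
        field_simp
        ring
      rw [this, elemLM_zero])

lemma elemLE_apply {n : ℕ} (x : Fin n × ℕ) (u : V n) (c : ℂ)
    (h : 1 + c * u x ≠ 0) (v : V n) :
    elemLE x u c h v = v + (c * v x) • u := by
  rw [elemLE, LinearEquiv.ofLinear_apply, elemLM_apply]

lemma elemLE_mem_G {n : ℕ} (x : Fin n × ℕ) (u : V n) (c : ℂ)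
    (h : 1 + c * u x ≠ 0) (hu : ∀ z : Fin n × ℕ, (x.1 : ℕ) < (z.1 : ℕ) → u z = 0) :
    elemLE x u c h ∈ G n := by
  classical
  constructor
  · rintro k _ ⟨v, hv, rfl⟩
    show elemLE x u c h v ∈ Vle n k
    rw [elemLE_apply, mem_Vle]
    intro z hz
    have hv' := mem_Vle.mp hv
    simp only [Finsupp.add_apply, Finsupp.smul_apply, smul_eq_mul]
    by_cases hxk : k ≤ (x.1 : ℕ)
    · rw [hv' z hz, hv' x hxk, mul_zero, zero_mul, add_zero]
    · push_neg at hxk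
      rw [hv' z hz, hu z (lt_of_lt_of_le hxk hz), mul_zero, add_zero]
  · refine ⟨insert x u.support, ?_, ?_⟩
    · intro z hz
      have hzx : z ≠ x := fun hzx => hz (by simp [hzx])
      show elemLE x u c h (ee z) = ee z
      rw [elemLE_apply]
      have : (ee z) x = 0 := by rw [ee, Finsupp.single_apply, if_neg hzx]
      rw [this, mul_zero, zero_smul, add_zero]
    · intro z hz
      show elemLE x u c h (ee z) ∈ _
      rw [elemLE_apply, mem_spanF]
      intro w hw
      have hwz : w ≠ z := fun e => hw (e ▸ hz)
      have hwu : u w = 0 := by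
        by_contra hne
        exact hw (Finset.mem_insert_of_mem (Finsupp.mem_support_iff.mpr hne))
      have h1 : (ee z) w = 0 := by
        rw [ee, Finsupp.single_apply, if_neg (fun e : z = w => hwz e.symm)]
      simp only [Finsupp.add_apply, Finsupp.smul_apply, smul_eq_mul]
      rw [h1, hwu, mul_zero, add_zero]

lemma ρQ_apply_mk {n k : ℕ} (g : G n) (v : V n) :
    ρQ n k g (Submodule.Quotient.mk v) = Submodule.Quotient.mk (g.1 v) := by
  show Submodule.mapQ (Vle n k) (Vle n k) (g.1 : V n →ₗ[ℂ] V n) (G_maps g k)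
      (Submodule.Quotient.mk v) = Submodule.Quotient.mk (g.1 v)
  rw [Submodule.mapQ_apply]
  rfl

lemma ee_self {n : ℕ} (x : Fin n × ℕ) : (ee x) x = 1 := by simp [ee]

lemma key_vanish (n : ℕ) (hn : 1 ≤ n) (i j : ℕ) (hi : 1 ≤ i) (hij : i < j) (hj : j ≤ n)
    (f : (V n ⧸ Vle n (j - 1)) →ₗ[ℂ] (V n ⧸ Vle n (i - 1)))
    (hf : ∀ g : G n, f ∘ₗ ρQ n (j - 1) g = ρQ n (i - 1) g ∘ₗ f)
    (x : Fin n × ℕ) (hx : j - 1 ≤ (x.1 : ℕ)) :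
    f (Submodule.Quotient.mk (ee x)) = 0 := by
  classical
  set y : Fin n × ℕ := (⟨i - 1, by omega⟩, 0) with hy
  have hyw : (y.1 : ℕ) = i - 1 := rfl
  have hyx : y ≠ x := by
    intro e
    have : (y.1 : ℕ) = (x.1 : ℕ) := by rw [e]
    omega
  obtain ⟨v, hv⟩ := Submodule.Quotient.mk_surjective _ (f (Submodule.Quotient.mk (ee x)))
  -- First automorphism: e_x ↦ 2 e_x
  have h1 : (1 : ℂ) + 1 * (ee x) x ≠ 0 := by rw [ee_self]; norm_num
  have hu1 : ∀ z : Fin n × ℕ, (x.1 : ℕ) < (z.1 : ℕ) → (ee x) z = 0 := by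
    intro z hz
    have : x ≠ z := fun e => by
      have : (x.1 : ℕ) = (z.1 : ℕ) := by rw [e]
      omega
    simp [ee, Finsupp.single_apply, this]
  set g1 : G n := ⟨elemLE x (ee x) 1 h1, elemLE_mem_G x (ee x) 1 h1 hu1⟩ with hg1
  have e1 := congrArg (fun φ => φ (Submodule.Quotient.mk (ee x) : V n ⧸ Vle n (j - 1)))
    (hf g1)
  simp only [LinearMap.comp_apply] at e1
  rw [ρQ_apply_mk] at e1
  have hg1x : g1.1 (ee x) = ee x + ee x := by
    show elemLE x (ee x) 1 h1 (ee x) = _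
    rw [elemLE_apply, ee_self, mul_one, one_smul]
  rw [hg1x, ← hv, ρQ_apply_mk] at e1
  have hg1v : g1.1 v = v + (v x) • ee x := by
    show elemLE x (ee x) 1 h1 v = _
    rw [elemLE_apply, one_mul]
  rw [hg1v] at e1
  have hmkadd : (Submodule.Quotient.mk (ee x + ee x) : V n ⧸ Vle n (j - 1)) =
      Submodule.Quotient.mk (ee x) + Submodule.Quotient.mk (ee x) := rfl
  rw [hmkadd, map_add, ← hv] at e1
  have e1' : Submodule.Quotient.mk v =
      (v x) • (Submodule.Quotient.mk (ee x) : V n ⧸ Vle n (i - 1)) := by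
    have : (Submodule.Quotient.mk (v + (v x) • ee x) : V n ⧸ Vle n (i - 1)) =
        Submodule.Quotient.mk v + (v x) • Submodule.Quotient.mk (ee x) := rfl
    rw [this] at e1
    exact add_left_cancel e1
  -- Second automorphism: e_x ↦ e_x + e_y
  have heyx : (ee y) x = 0 := by simp [ee, Finsupp.single_apply, hyx]
  have h2 : (1 : ℂ) + 1 * (ee y) x ≠ 0 := by rw [heyx]; norm_num
  have hu2 : ∀ z : Fin n × ℕ, (x.1 : ℕ) < (z.1 : ℕ) → (ee y) z = 0 := by
    intro z hz
    have : y ≠ z := fun e => by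
      have : (y.1 : ℕ) = (z.1 : ℕ) := by rw [e]
      omega
    simp [ee, Finsupp.single_apply, this]
  set g2 : G n := ⟨elemLE x (ee y) 1 h2, elemLE_mem_G x (ee y) 1 h2 hu2⟩ with hg2
  have e2 := congrArg (fun φ => φ (Submodule.Quotient.mk (ee x) : V n ⧸ Vle n (j - 1)))
    (hf g2)
  simp only [LinearMap.comp_apply] at e2
  rw [ρQ_apply_mk] at e2
  have hg2x : g2.1 (ee x) = ee x + ee y := by
    show elemLE x (ee y) 1 h2 (ee x) = _
    rw [elemLE_apply, ee_self, mul_one, one_smul]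
  rw [hg2x, ← hv, ρQ_apply_mk] at e2
  have hg2v : g2.1 v = v + (v x) • ee y := by
    show elemLE x (ee y) 1 h2 v = _
    rw [elemLE_apply, one_mul]
  rw [hg2v] at e2
  have heyj : (ee y : V n) ∈ Vle n (j - 1) :=
    Submodule.subset_span ⟨y, by omega, rfl⟩
  have hmk2 : (Submodule.Quotient.mk (ee x + ee y) : V n ⧸ Vle n (j - 1)) =
      Submodule.Quotient.mk (ee x) := by
    rw [show (Submodule.Quotient.mk (ee x + ee y) : V n ⧸ Vle n (j - 1)) =
        Submodule.Quotient.mk (ee x) + Submodule.Quotient.mk (ee y) from rfl,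
      (Submodule.Quotient.mk_eq_zero _).mpr heyj, add_zero]
  rw [hmk2, ← hv] at e2
  have e2' : (v x) • (Submodule.Quotient.mk (ee y) : V n ⧸ Vle n (i - 1)) = 0 := by
    have : (Submodule.Quotient.mk (v + (v x) • ee y) : V n ⧸ Vle n (i - 1)) =
        Submodule.Quotient.mk v + (v x) • Submodule.Quotient.mk (ee y) := rfl
    rw [this] at e2
    exact add_eq_left.mp e2.symm
  have heyne : (Submodule.Quotient.mk (ee y) : V n ⧸ Vle n (i - 1)) ≠ 0 := by
    rw [Ne, Submodule.Quotient.mk_eq_zero, mem_Vle]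
    push_neg
    exact ⟨y, by omega, by rw [ee_self]; norm_num⟩
  have hvx : v x = 0 := by
    rcases smul_eq_zero.mp e2' with h | h
    · exact h
    · exact absurd h heyne
  rw [← hv, e1', hvx, zero_smul]

/-- For `1 ≤ i < j ≤ n`, every `G`-equivariant linear map `V/V_{j-1} → V/V_{i-1}`
is zero. -/
theorem stmt11 (n : ℕ) (hn : 1 ≤ n) (i j : ℕ) (hi : 1 ≤ i) (hij : i < j) (hj : j ≤ n)
    (f : (V n ⧸ Vle n (j - 1)) →ₗ[ℂ] (V n ⧸ Vle n (i - 1)))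
    (hf : ∀ g : G n, f ∘ₗ ρQ n (j - 1) g = ρQ n (i - 1) g ∘ₗ f) :
    f = 0 := by
  have hcomp : f ∘ₗ (Vle n (j - 1)).mkQ = 0 := by
    refine Finsupp.lhom_ext fun a b => ?_
    have hsingle : (Finsupp.single a b : V n) = b • ee a := by
      rw [ee, Finsupp.smul_single, smul_eq_mul, mul_one]
    rw [LinearMap.comp_apply, LinearMap.zero_apply, hsingle, map_smul, map_smul]
    by_cases ha : j - 1 ≤ (a.1 : ℕ)
    · have := key_vanish n hn i j hi hij hj f hf a ha
      rw [Submodule.mkQ_apply, this, smul_zero]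
    · push_neg at ha
      have : (ee a : V n) ∈ Vle n (j - 1) := Submodule.subset_span ⟨a, ha, rfl⟩
      rw [Submodule.mkQ_apply, (Submodule.Quotient.mk_eq_zero _).mpr this, map_zero,
        smul_zero]
  refine LinearMap.ext fun q => ?_
  obtain ⟨v, rfl⟩ := Submodule.Quotient.mk_surjective _ q
  have := congrArg (fun φ => φ v) hcomp
  simpa using this
end
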